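/- arXiv:2402.08131 — 12 statements merged into one kernel-verified Lean document; each statement's English description precedes it below -/
import Mathlib

section
/- Let G be a finite group and a, b, c nontrivial elements of G. Then the product of conjugacy classes a^G · b^G equals the conjugacy class c^G if and only if χ(a)χ(b) = χ(c)χ(1) for all irreducible characters χ of G. -/
/-!
The class sums `Ĉₐ = ∑_{x ∈ aᴳ} x` are central in `k[G]`, so by Schur's lemma each of them acts
on an irreducible representation `V` as the scalar `ω_V(a) = |aᴳ| χ_V(a) / χ_V(1)`.
The coefficient of `g` in `Ĉₐ Ĉ_b` counts the factorisations `g = xy` with `x ∈ aᴳ`, `y ∈ bᴳ`;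
this count is constant on conjugacy classes, so `aᴳ bᴳ = cᴳ` holds iff
`Ĉₐ Ĉ_b = (|aᴳ| |bᴳ| / |cᴳ|) Ĉ_c`, the constant being forced by the augmentation map.
Since `ℂ[G]` is semisimple, an element acting as zero on every irreducible representation is zero,
so this identity holds iff `ω_V(a) ω_V(b) = (|aᴳ| |bᴳ| / |cᴳ|) ω_V(c)` for all irreducible `V`,
which rearranges to `χ(a) χ(b) = χ(c) χ(1)`.
-/

open Pointwise CategoryTheory

/-- The conjugacy class of `a` in `G`. -/
def conjClass (G : Type*) [Group G] (a : G) : Set G := {b | IsConj a b}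

open MonoidAlgebra Representation Finset

universe u

section ClassSums

variable {G k : Type*} [Group G] [Fintype G] [DecidableEq G]

theorem mem_toFinset_conjugatesOf {a x : G} : x ∈ (conjugatesOf a).toFinset ↔ IsConj a x :=
  Set.mem_toFinset

theorem cast_card_toFinset_conjugatesOf_ne_zero [AddMonoidWithOne k] [CharZero k]
    (a : G) : (#(conjugatesOf a).toFinset : k) ≠ 0 :=
  Nat.cast_ne_zero.2 (card_ne_zero_of_mem (mem_toFinset_conjugatesOf.2 (IsConj.refl a)))

def conjMulFiber (a b g : G) : Finset (G × G) :=
  {p ∈ (conjugatesOf a).toFinset ×ˢ (conjugatesOf b).toFinset | p.1 * p.2 = g}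

theorem mem_conjMulFiber {a b g : G} {p : G × G} :
    p ∈ conjMulFiber a b g ↔ IsConj a p.1 ∧ IsConj b p.2 ∧ p.1 * p.2 = g := by
  simp only [conjMulFiber, mem_filter, mem_product, mem_toFinset_conjugatesOf, and_assoc]

theorem conjMulFiber_nonempty_iff {a b g : G} :
    (conjMulFiber a b g).Nonempty ↔ g ∈ conjugatesOf a * conjugatesOf b := by
  simp only [Finset.Nonempty, mem_conjMulFiber, Set.mem_mul, Prod.exists, exists_and_left]
  rfl

theorem card_conjMulFiber_of_isConj {a b g g' : G} (h : IsConj g g') :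
    #(conjMulFiber a b g) = #(conjMulFiber a b g') := by
  obtain ⟨c, rfl⟩ := isConj_iff.1 h
  refine card_nbij' (fun p => (c * p.1 * c⁻¹, c * p.2 * c⁻¹))
    (fun p => (c⁻¹ * p.1 * c, c⁻¹ * p.2 * c)) ?_ ?_ ?_ ?_
  · rintro ⟨x, y⟩ hp
    simp only [mem_coe, mem_conjMulFiber] at hp ⊢
    obtain ⟨hx, hy, rfl⟩ := hp
    exact ⟨hx.trans (isConj_iff.2 ⟨c, rfl⟩), hy.trans (isConj_iff.2 ⟨c, rfl⟩), by group⟩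
  · rintro ⟨x, y⟩ hp
    simp only [mem_coe, mem_conjMulFiber] at hp ⊢
    obtain ⟨hx, hy, hxy⟩ := hp
    refine ⟨hx.trans (isConj_iff.2 ⟨c⁻¹, by group⟩), hy.trans (isConj_iff.2 ⟨c⁻¹, by group⟩), ?_⟩
    simp only [mul_assoc, mul_inv_cancel_left, ← mul_assoc x, hxy]
    group
  · intro p _
    simp [mul_assoc]
  · intro p _
    simp [mul_assoc]

variable (k) in
noncomputable def classSum [Semiring k] (a : G) : k[G] :=
  ∑ x ∈ (conjugatesOf a).toFinset, single x 1

theorem coeff_classSum [Semiring k] (a g : G) :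
    (classSum k a).coeff g = if IsConj a g then 1 else 0 := by
  simp only [classSum, coeff_sum, coeff_single, Finsupp.finsetSum_apply, Finsupp.single_apply,
    sum_ite_eq']
  exact if_congr mem_toFinset_conjugatesOf rfl rfl

theorem coeff_classSum_mul_classSum [Semiring k] (a b g : G) :
    (classSum k a * classSum k b).coeff g = #(conjMulFiber a b g) := by
  simp only [classSum, sum_mul_sum, single_mul_single, one_mul, coeff_sum, coeff_single,
    Finsupp.finsetSum_apply, Finsupp.single_apply, ← sum_product', sum_boole]
  rfl

theorem commute_single_classSum [Semiring k] (g a : G) : Commute (single g 1) (classSum k a) := by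
  ext x
  simp only [coeff_single_mul_apply, coeff_mul_single_apply, coeff_classSum, one_mul, mul_one]
  have h : IsConj (x * g⁻¹) (g⁻¹ * x) := isConj_iff.2 ⟨g⁻¹, by group⟩
  exact if_congr ⟨fun h' => h'.trans h.symm, fun h' => h'.trans h⟩ rfl rfl

theorem classSum_mul_classSum_of_mul_eq [Semiring k] {a b c : G}
    (h : conjugatesOf a * conjugatesOf b = conjugatesOf c) :
    classSum k a * classSum k b = (#(conjMulFiber a b c) : k) • classSum k c := by
  ext g
  rw [coeff_classSum_mul_classSum, coeff_smul_apply, coeff_classSum, smul_eq_mul]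
  split_ifs with hg
  · rw [card_conjMulFiber_of_isConj hg, mul_one]
  · have hfib : conjMulFiber a b g = ∅ := by
      rw [← not_nonempty_iff_eq_empty, conjMulFiber_nonempty_iff, h]
      exact hg
    rw [hfib, card_empty, Nat.cast_zero, mul_zero]

theorem conjugatesOf_mul_conjugatesOf_eq_of_classSum_mul_classSum_eq_smul [Semiring k] [CharZero k]
    {a b c : G} {r : k} (hr : r ≠ 0) (h : classSum k a * classSum k b = r • classSum k c) :
    conjugatesOf a * conjugatesOf b = conjugatesOf c := by
  ext g
  have hg := congr_arg (coeff · g) h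
  rw [coeff_classSum_mul_classSum, coeff_smul_apply, coeff_classSum, smul_eq_mul] at hg
  rw [← conjMulFiber_nonempty_iff, ← card_ne_zero, ← Nat.cast_ne_zero (R := k), hg]
  split_ifs with hc
  · exact iff_of_true (by rwa [mul_one]) hc
  · exact iff_of_false (by rw [mul_zero]; exact (· rfl)) hc

theorem lift_one_classSum [CommSemiring k] (a : G) :
    lift k k G 1 (classSum k a) = #(conjugatesOf a).toFinset := by
  simp [classSum]

theorem conjugatesOf_mul_conjugatesOf_eq_iff [Field k] [CharZero k] {a b c : G} :
    conjugatesOf a * conjugatesOf b = conjugatesOf c ↔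
      classSum k a * classSum k b =
        (#(conjugatesOf a).toFinset * #(conjugatesOf b).toFinset / #(conjugatesOf c).toFinset : k) •
          classSum k c := by
  have hA := cast_card_toFinset_conjugatesOf_ne_zero (k := k) a
  have hB := cast_card_toFinset_conjugatesOf_ne_zero (k := k) b
  have hC := cast_card_toFinset_conjugatesOf_ne_zero (k := k) c
  refine ⟨fun h => ?_, conjugatesOf_mul_conjugatesOf_eq_of_classSum_mul_classSum_eq_smul
    (div_ne_zero (mul_ne_zero hA hB) hC)⟩
  have hsum := classSum_mul_classSum_of_mul_eq (k := k) h
  have hcard := congr_arg (lift k k G 1) hsum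
  rw [map_mul, map_smul, lift_one_classSum, lift_one_classSum, lift_one_classSum,
    smul_eq_mul] at hcard
  rw [hsum, hcard, mul_div_cancel_right₀ _ hC]

end ClassSums

section Representations

variable {k G : Type u} [Field k] [Group G]

noncomputable def FDRep.intertwiningMapEquiv (V W : FDRep k G) :
    IntertwiningMap V.ρ W.ρ ≃ₗ[k] (V ⟶ W) :=
  (Rep.homLinearEquiv ((forget₂ (FDRep k G) (Rep k G)).obj V)
    ((forget₂ (FDRep k G) (Rep k G)).obj W)).symm ≪≫ₗ FDRep.forget₂HomLinearEquiv V W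

theorem FDRep.nontrivial_of_simple (V : FDRep k G) [Simple V] : Nontrivial V := by
  by_contra h
  rw [not_nontrivial_iff_subsingleton] at h
  apply id_nonzero V
  apply (intertwiningMapEquiv V V).symm.injective
  exact IntertwiningMap.ext (LinearMap.ext fun _ => Subsingleton.elim _ _)

theorem FDRep.character_one_ne_zero [CharZero k] (V : FDRep k G) [Simple V] :
    V.character 1 ≠ 0 := by
  have := nontrivial_of_simple V
  rw [char_one]
  exact Nat.cast_ne_zero.2 Module.finrank_pos.ne'

theorem FDRep.exists_asAlgebraHom_eq_algebraMap [IsAlgClosed k] (V : FDRep k G) [Simple V]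
    {z : k[G]} (hz : ∀ g, Commute (single g 1) z) :
    ∃ μ : k, asAlgebraHom V.ρ z = algebraMap k _ μ := by
  have hcomm (g : G) : asAlgebraHom V.ρ z ∘ₗ V.ρ g = V.ρ g ∘ₗ asAlgebraHom V.ρ z := by
    rw [← asAlgebraHom_single_one, ← Module.End.mul_eq_comp, ← Module.End.mul_eq_comp,
      ← map_mul, ← map_mul, (hz g).eq]
  obtain ⟨μ, hμ⟩ := endomorphism_simple_eq_smul_id k (intertwiningMapEquiv V V ⟨_, hcomm⟩)
  have hμ' := congr_arg (fun φ => ((intertwiningMapEquiv V V).symm φ).toLinearMap) hμ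
  simp only [LinearEquiv.symm_apply_apply, map_smul] at hμ'
  refine ⟨μ, ?_⟩
  rw [← hμ', IntertwiningMap.toLinearMap_smul, Algebra.algebraMap_eq_smul_one]
  rfl

theorem Representation.asAlgebraHom_ofModule' (M : Type u) [AddCommGroup M] [Module k M]
    [Module k[G] M] [IsScalarTower k k[G] M] :
    asAlgebraHom (ofModule' (k := k) (G := G) M) = Algebra.lsmul k k M := by
  rw [asAlgebraHom_def, ofModule']
  exact (lift k _ G).apply_symm_apply _

theorem Representation.isIrreducible_ofModule' (M : Type u) [AddCommGroup M] [Module k M]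
    [Module k[G] M] [IsScalarTower k k[G] M] [IsSimpleModule k[G] M] :
    IsIrreducible (ofModule' (k := k) (G := G) M) :=
  (irreducible_iff_isSimpleModule_asModule _).2 <| IsSimpleModule.congr
    { (ofModule' (k := k) (G := G) M).asModuleEquiv with
      map_smul' r x := by simp [asModuleEquiv_map_smul, asAlgebraHom_ofModule'] }

theorem FDRep.simple_of_isIrreducible [IsAlgClosed k] [Finite G] [NeZero (Nat.card G : k)]
    {V : Type u} [AddCommGroup V] [Module k V] [Module.Finite k V]
    (ρ : Representation k G V) [IsIrreducible ρ] : Simple (FDRep.of ρ) := by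
  rw [simple_iff_end_is_rank_one, ← (intertwiningMapEquiv _ _).finrank_eq]
  exact IsIrreducible.finrank_intertwiningMap_self ρ

theorem MonoidAlgebra.eq_zero_of_forall_simple [IsAlgClosed k] [Finite G]
    [NeZero (Nat.card G : k)] {z : k[G]}
    (hz : ∀ V : FDRep k G, Simple V → asAlgebraHom V.ρ z = 0) : z = 0 := by
  have hsimple (S : Submodule k[G] k[G]) (hS : IsSimpleModule k[G] S) : z ∈ S.annihilator := by
    have := isIrreducible_ofModule' (k := k) (G := G) S
    refine Submodule.mem_annihilator.2 fun s hs => ?_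
    have hzs := LinearMap.congr_fun
      (hz _ (FDRep.simple_of_isIrreducible (ofModule' (k := k) (G := G) S))) ⟨s, hs⟩
    simpa [asAlgebraHom_ofModule'] using hzs
  have hz_top : z ∈ (⊤ : Submodule k[G] k[G]).annihilator := by
    rw [← IsSemisimpleModule.sSup_simples_eq_top, sSup_eq_iSup', Submodule.annihilator_iSup,
      Submodule.mem_iInf]
    rintro ⟨S, hS⟩
    exact hsimple S hS
  simpa using Submodule.mem_annihilator.1 hz_top 1 trivial

variable [Fintype G] [DecidableEq G]

theorem FDRep.trace_asAlgebraHom_classSum (V : FDRep k G) (a : G) :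
    LinearMap.trace k V (asAlgebraHom V.ρ (classSum k a)) =
      #(conjugatesOf a).toFinset * V.character a := by
  rw [classSum, map_sum, map_sum, ← nsmul_eq_mul, ← sum_const]
  refine sum_congr rfl fun x hx => ?_
  obtain ⟨c, rfl⟩ := isConj_iff.1 (mem_toFinset_conjugatesOf.1 hx)
  rw [asAlgebraHom_single_one]
  exact char_conj V a c

noncomputable def FDRep.centralChar (V : FDRep k G) (a : G) : k :=
  #(conjugatesOf a).toFinset * V.character a / V.character 1

theorem FDRep.centralChar_mul_centralChar_eq_iff [CharZero k] (V : FDRep k G) [Simple V]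
    (a b c : G) :
    V.centralChar a * V.centralChar b =
        (#(conjugatesOf a).toFinset * #(conjugatesOf b).toFinset / #(conjugatesOf c).toFinset : k) *
          V.centralChar c ↔
      V.character a * V.character b = V.character c * V.character 1 := by
  have hχ1 := character_one_ne_zero V
  have hA := cast_card_toFinset_conjugatesOf_ne_zero (k := k) a
  have hB := cast_card_toFinset_conjugatesOf_ne_zero (k := k) b
  have hC := cast_card_toFinset_conjugatesOf_ne_zero (k := k) c
  simp only [centralChar]
  field_simp

theorem FDRep.asAlgebraHom_classSum [IsAlgClosed k] [CharZero k] (V : FDRep k G) [Simple V]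
    (a : G) : asAlgebraHom V.ρ (classSum k a) = algebraMap k _ (V.centralChar a) := by
  obtain ⟨μ, hμ⟩ := exists_asAlgebraHom_eq_algebraMap V (commute_single_classSum (k := k) · a)
  have htr := trace_asAlgebraHom_classSum V a
  rw [hμ, Module.algebraMap_end_eq_smul_id, map_smul, LinearMap.trace_id, smul_eq_mul,
    ← char_one] at htr
  rw [hμ, centralChar, ← htr, mul_div_cancel_right₀ _ (character_one_ne_zero V)]

theorem classSum_mul_classSum_eq_smul_iff [IsAlgClosed k] [CharZero k] {a b c : G} {r : k} :
    classSum k a * classSum k b = r • classSum k c ↔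
      ∀ V : FDRep k G, Simple V → V.centralChar a * V.centralChar b = r * V.centralChar c := by
  have key (V : FDRep k G) [Simple V] :
      asAlgebraHom V.ρ (classSum k a * classSum k b - r • classSum k c) =
        algebraMap k _ (V.centralChar a * V.centralChar b - r * V.centralChar c) := by
    rw [map_sub, map_mul, map_smul, FDRep.asAlgebraHom_classSum, FDRep.asAlgebraHom_classSum,
      FDRep.asAlgebraHom_classSum, map_sub, map_mul, map_mul, Algebra.smul_def]
  refine ⟨fun h V hV => ?_, fun h => ?_⟩
  · have := FDRep.nontrivial_of_simple V
    have hV := key V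
    rw [h, sub_self, map_zero] at hV
    exact sub_eq_zero.1 <| (map_eq_zero_iff _ (algebraMap k _).injective).1 hV.symm
  · rw [← sub_eq_zero]
    exact eq_zero_of_forall_simple fun V hV => by rw [key V, h V hV, sub_self, map_zero]

end Representations

theorem stmt0_general {G : Type} [Group G] [Fintype G] (a b c : G) :
    conjClass G a * conjClass G b = conjClass G c ↔
      ∀ (V : FDRep ℂ G), Simple V →
        V.character a * V.character b = V.character c * V.character 1 := by
  classical
  rw [show conjClass G = conjugatesOf from rfl, conjugatesOf_mul_conjugatesOf_eq_iff (k := ℂ),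
    classSum_mul_classSum_eq_smul_iff]
  exact forall₂_congr fun V _ => FDRep.centralChar_mul_centralChar_eq_iff V a b c

theorem stmt0 {G : Type} [Group G] [Fintype G] (a b c : G)
    (ha : a ≠ 1) (hb : b ≠ 1) (hc : c ≠ 1) :
    conjClass G a * conjClass G b = conjClass G c ↔
      ∀ (V : FDRep ℂ G), Simple V →
        V.character a * V.character b = V.character c * V.character 1 :=
  stmt0_general a b c
end

section
/- Let G be a finite group, K₁,...,Kₙ conjugacy classes with Kᵢ = xᵢ^G, and D = d^G a conjugacy class. Then K₁K₂⋯Kₙ = D if and only if χ(x₁)⋯χ(xₙ) = χ(1)^{n-1} χ(d) for all irreducible characters χ of G. -/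
open Pointwise CategoryTheory

/-!
Work in `ℂ[G]` with the class sums `K⁺ = ∑_{g ∈ K} g`. The coefficient of `g` in `K₁⁺ ⋯ Kₙ⁺`
counts the factorisations `g = k₁ ⋯ kₙ` with `kᵢ ∈ Kᵢ`, so its support is the set product
`K₁ ⋯ Kₙ`; the product is also central. Hence `K₁ ⋯ Kₙ = D` exactly when `K₁⁺ ⋯ Kₙ⁺ = c • D⁺`,
and comparing augmentations forces `c = |K₁| ⋯ |Kₙ| / |D|`. By Schur's lemma `K⁺` acts on an
irreducible `V` as the scalar `|K| χ(x) / χ(1)`, and since `ℂ[G]` is semisimple an element acting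
as zero on every irreducible representation is zero; so that equation in `ℂ[G]` is equivalent to
the family of character identities.
-/

open MonoidAlgebra Representation Module

noncomputable def setSum (k : Type*) {G : Type*} [Semiring k] [Finite G] (S : Set G) :
    MonoidAlgebra k G :=
  ∑ g ∈ S.toFinite.toFinset, single g 1

section SetSum

variable {k G : Type*} [Semiring k]

lemma coeff_conj_of_commute [Group G] {z : MonoidAlgebra k G}
    (hz : ∀ h : G, Commute (single h 1) z) (h g : G) : z.coeff (h * g * h⁻¹) = z.coeff g := by
  have := congrArg (fun w : MonoidAlgebra k G => w.coeff (h * g)) (hz h).eq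
  simpa [coeff_single_mul_apply, coeff_mul_single_apply] using this.symm

variable [Finite G]

lemma coeff_setSum (S : Set G) (g : G) : (setSum k S).coeff g = S.indicator 1 g := by
  classical
  simp [setSum, coeff_sum, Finsupp.single_apply, Set.indicator_apply]

variable [Group G]

lemma coeff_setSum_mul (S : Set G) (z : MonoidAlgebra k G) (g : G) :
    (setSum k S * z).coeff g = ∑ a ∈ S.toFinite.toFinset, z.coeff (a⁻¹ * g) := by
  simp [setSum, Finset.sum_mul, coeff_sum, coeff_single_mul_apply]

lemma exists_natCast_coeff_list_prod_setSum (L : List (Set G)) :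
    ∃ N : G → ℕ, (∀ g, (L.map (setSum k)).prod.coeff g = N g) ∧ ∀ g, N g ≠ 0 ↔ g ∈ L.prod := by
  induction L with
  | nil =>
    classical
    refine ⟨fun g => if g = 1 then 1 else 0, fun g => ?_, fun g => ?_⟩
    · simp [one_def, Finsupp.single_apply, eq_comm]
    · simp
  | cons S L ih =>
    obtain ⟨N, hN, hN_ne⟩ := ih
    refine ⟨fun g => ∑ a ∈ S.toFinite.toFinset, N (a⁻¹ * g), fun g => ?_, fun g => ?_⟩
    · simp [coeff_setSum_mul, hN]
    · simp only [ne_eq, Finset.sum_eq_zero_iff, not_forall, Set.Finite.mem_toFinset,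
        List.prod_cons, Set.mem_mul, hN_ne, exists_prop]
      constructor
      · rintro ⟨a, ha, hg⟩
        exact ⟨a, ha, a⁻¹ * g, hg, mul_inv_cancel_left a g⟩
      · rintro ⟨a, ha, b, hb, rfl⟩
        exact ⟨a, ha, by rwa [inv_mul_cancel_left]⟩

lemma coeff_list_prod_setSum_ne_zero_iff [CharZero k] (L : List (Set G)) (g : G) :
    (L.map (setSum k)).prod.coeff g ≠ 0 ↔ g ∈ L.prod := by
  obtain ⟨N, hN, hN_ne⟩ := exists_natCast_coeff_list_prod_setSum (k := k) L
  rw [hN, Nat.cast_ne_zero, hN_ne]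

lemma commute_single_setSum_conjClass (h x : G) :
    Commute (single h (1 : k)) (setSum k (conjClass G x)) := by
  classical
  refine coeff_injective (Finsupp.ext fun g => ?_)
  have hconj : h⁻¹ * g ∈ conjClass G x ↔ g * h⁻¹ ∈ conjClass G x :=
    ⟨fun hx => hx.trans (isConj_iff.mpr ⟨h, by group⟩),
      fun hx => hx.trans (isConj_iff.mpr ⟨h⁻¹, by group⟩)⟩
  simp only [coeff_single_mul_apply, coeff_mul_single_apply, coeff_setSum, one_mul, mul_one,
    Set.indicator_apply, Pi.one_apply, hconj]

lemma eq_coeff_smul_setSum_conjClass {z : MonoidAlgebra k G}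
    (hz : ∀ h : G, Commute (single h 1) z) {d : G}
    (hsupp : ∀ g, z.coeff g ≠ 0 → g ∈ conjClass G d) :
    z = z.coeff d • setSum k (conjClass G d) := by
  refine coeff_injective (Finsupp.ext fun g => ?_)
  rw [coeff_smul_apply, coeff_setSum, smul_eq_mul]
  by_cases hg : g ∈ conjClass G d
  · obtain ⟨c, rfl⟩ := isConj_iff.mp hg
    rw [Set.indicator_of_mem hg, Pi.one_apply, mul_one, coeff_conj_of_commute hz]
  · rw [Set.indicator_of_notMem hg, mul_zero]
    by_contra h
    exact hg (hsupp g h)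

end SetSum

section ClassSum

variable {k G : Type*} [Group G] [Finite G]

lemma lift_one_setSum [CommSemiring k] (S : Set G) :
    lift k k G 1 (setSum k S) = Nat.card S := by
  simp [setSum, lift_single, Nat.card_coe_set_eq, Set.ncard_eq_toFinset_card S]

lemma natCast_card_conjClass_ne_zero [AddMonoidWithOne k] [CharZero k] (x : G) :
    (Nat.card (conjClass G x) : k) ≠ 0 := by
  have : Nonempty (conjClass G x) := ⟨⟨x, IsConj.refl x⟩⟩
  exact Nat.cast_ne_zero.mpr Nat.card_pos.ne'

lemma prod_conjClass_eq_conjClass_iff [Field k] [CharZero k] {n : ℕ} (x : Fin n → G) (d : G) :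
    (List.ofFn fun i => conjClass G (x i)).prod = conjClass G d ↔
      (List.ofFn fun i => setSum k (conjClass G (x i))).prod =
        ((∏ i, (Nat.card (conjClass G (x i)) : k)) / Nat.card (conjClass G d)) •
          setSum k (conjClass G d) := by
  have hsupp := coeff_list_prod_setSum_ne_zero_iff (k := k) (List.ofFn fun i => conjClass G (x i))
  simp only [List.map_ofFn, Function.comp_def] at hsupp
  set P := (List.ofFn fun i => setSum k (conjClass G (x i))).prod
  have hP : ∀ h : G, Commute (single h 1) P := fun h =>
    Commute.list_prod_right _ _ fun _ hS =>
      let ⟨i, hi⟩ := List.mem_ofFn.mp hS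
      hi ▸ commute_single_setSum_conjClass h (x i)
  have hc : ∏ i, (Nat.card (conjClass G (x i)) : k) ≠ 0 :=
    Finset.prod_ne_zero_iff.mpr fun i _ => natCast_card_conjClass_ne_zero (x i)
  constructor
  · intro hprod
    have hPd := eq_coeff_smul_setSum_conjClass hP fun g hg => hprod ▸ (hsupp g).mp hg
    have hlift := congrArg (lift k k G 1) hPd
    rw [map_list_prod, List.map_ofFn, List.prod_ofFn, map_smul, smul_eq_mul] at hlift
    simp only [Function.comp_apply, lift_one_setSum] at hlift
    rwa [hlift, mul_div_cancel_right₀ _ (natCast_card_conjClass_ne_zero d)]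
  · intro hPeq
    ext g
    rw [← hsupp, hPeq, coeff_smul_apply, coeff_setSum, smul_eq_mul]
    by_cases hg : g ∈ conjClass G d
    · rw [Set.indicator_of_mem hg, Pi.one_apply, mul_one]
      simpa [hg] using div_ne_zero hc (natCast_card_conjClass_ne_zero d)
    · rw [Set.indicator_of_notMem hg, mul_zero]
      simp [hg]

end ClassSum

section Representations

variable {k G : Type} [Field k] [Group G]

namespace FDRep

/-- The instances are passed explicitly: instance search does not identify the additive structure
of `RestrictScalars k k[G] M` coming from `AddCommGroup M` with the one `RestrictScalars.module`
is built on. -/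
noncomputable def ofModule [Finite G] (M : Type) [AddCommGroup M] [Module (MonoidAlgebra k G) M]
    [Module.Finite (MonoidAlgebra k G) M] : FDRep k G :=
  let := RestrictScalars.moduleOrig k (MonoidAlgebra k G) M
  have : Module.Finite (MonoidAlgebra k G) (RestrictScalars k (MonoidAlgebra k G) M) :=
    ‹Module.Finite _ M›
  have := Module.Finite.trans (R := k) (MonoidAlgebra k G)
    (RestrictScalars k (MonoidAlgebra k G) M)
  @FDRep.of k G _ _ (RestrictScalars k (MonoidAlgebra k G) M) _
    (RestrictScalars.module k (MonoidAlgebra k G) M) this (Representation.ofModule M)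

section OfModule

variable [Finite G] (M : Type) [AddCommGroup M] [Module (MonoidAlgebra k G) M]
  [Module.Finite (MonoidAlgebra k G) M]

lemma simple_ofModule [IsSimpleModule (MonoidAlgebra k G) M] :
    Simple (ofModule (k := k) (G := G) M) := by
  have : Simple (Rep.ofModuleMonoidAlgebra.obj (ModuleCat.of (MonoidAlgebra k G) M)) :=
    simple_obj _ _
  have : Simple ((forget₂ (FDRep k G) (Rep k G)).obj (ofModule M)) := this
  exact (forget₂ (FDRep k G) (Rep k G)).simple_of_simple_obj _

lemma smul_eq_zero_of_asAlgebraHom_ofModule_eq_zero {z : MonoidAlgebra k G}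
    (hz : asAlgebraHom (ofModule (k := k) M).ρ z = 0) (m : M) : z • m = 0 := by
  apply (RestrictScalars.addEquiv k (MonoidAlgebra k G) M).symm.injective
  have h := ofModule_asAlgebraHom_apply_apply M z ((RestrictScalars.addEquiv k _ M).symm m)
  rw [AddEquiv.apply_symm_apply] at h
  rw [← h, map_zero]
  exact LinearMap.congr_fun hz _

end OfModule

end FDRep

lemma MonoidAlgebra.eq_of_forall_asAlgebraHom_eq [Finite G] [NeZero (Nat.card G : k)]
    {a b : MonoidAlgebra k G}
    (h : ∀ V : FDRep k G, Simple V → asAlgebraHom V.ρ a = asAlgebraHom V.ρ b) : a = b := by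
  rw [← sub_eq_zero]
  have hS : ∀ S : Submodule (MonoidAlgebra k G) (MonoidAlgebra k G),
      IsSimpleModule (MonoidAlgebra k G) S → ∀ s ∈ S, (a - b) * s = 0 := by
    intro S hS s hs
    have h0 : asAlgebraHom (FDRep.ofModule (k := k) (G := G) S).ρ (a - b) = 0 := by
      rw [map_sub, sub_eq_zero]
      exact h _ (FDRep.simple_ofModule S)
    simpa using
      congrArg Subtype.val (FDRep.smul_eq_zero_of_asAlgebraHom_ofModule_eq_zero S h0 ⟨s, hs⟩)
  have h1 : (1 : MonoidAlgebra k G) ∈ (⊤ : Submodule (MonoidAlgebra k G) (MonoidAlgebra k G)) :=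
    trivial
  rw [← IsSemisimpleModule.sSup_simples_eq_top, sSup_eq_iSup'] at h1
  simpa using Submodule.iSup_induction _ (motive := fun s => (a - b) * s = 0) h1
    (fun S => hS S.1 S.2) (mul_zero _) fun x y hx hy => by rw [mul_add, hx, hy, add_zero]

namespace FDRep

variable (V : FDRep k G)

lemma trace_asAlgebraHom_setSum_conjClass [Finite G] (x : G) :
    LinearMap.trace k V (asAlgebraHom V.ρ (setSum k (conjClass G x))) =
      Nat.card (conjClass G x) * V.character x := by
  rw [setSum, map_sum, map_sum, Nat.card_coe_set_eq,
    Set.ncard_eq_toFinset_card _ (Set.toFinite _), ← nsmul_eq_mul, ← Finset.sum_const]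
  refine Finset.sum_congr rfl fun a ha => ?_
  have hxa : a ∈ conjClass G x := (Set.Finite.mem_toFinset _).mp ha
  obtain ⟨c, rfl⟩ := isConj_iff.mp hxa
  rw [asAlgebraHom_single_one]
  exact char_conj V x c

variable [Simple V]

instance nontrivial_of_simple_s1 : Nontrivial V := by
  by_contra h
  rw [not_nontrivial_iff_subsingleton] at h
  exact id_nonzero V (Action.Hom.ext (FGModuleCat.hom_ext (Subsingleton.elim _ _)))

lemma character_one_ne_zero_s1 [CharZero k] : V.character 1 ≠ 0 := by
  rw [char_one, Nat.cast_ne_zero]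
  exact Module.finrank_pos.ne'

variable [IsAlgClosed k]

lemma exists_eq_algebraMap_of_forall_commute (T : Module.End k V)
    (hT : ∀ g, Commute (V.ρ g) T) : ∃ c : k, T = algebraMap k _ c := by
  let f : V ⟶ V :=
    ⟨ConcreteCategory.ofHom T, fun g => by ext v; exact LinearMap.congr_fun (hT g).symm.eq v⟩
  have h1 : finrank k (V ⟶ V) = 1 := by
    rw [FDRep.finrank_hom_simple_simple V V, if_pos ⟨Iso.refl V⟩]
  obtain ⟨c, hc⟩ := (finrank_eq_one_iff_of_nonzero' (𝟙 V) (id_nonzero V)).mp h1 f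
  refine ⟨c, ?_⟩
  have h2 := congrArg Action.Hom.hom hc
  rw [Action.smul_hom] at h2
  rw [Module.algebraMap_end_eq_smul_id]
  exact congrArg (fun φ => φ.hom.hom) h2.symm

variable [CharZero k] [Finite G]

lemma asAlgebraHom_setSum_conjClass (x : G) :
    asAlgebraHom V.ρ (setSum k (conjClass G x)) =
      algebraMap k _ (Nat.card (conjClass G x) * V.character x / V.character 1) := by
  obtain ⟨c, hc⟩ := exists_eq_algebraMap_of_forall_commute V _ fun g => by
    rw [← asAlgebraHom_single_one V.ρ g]
    exact (commute_single_setSum_conjClass g x).map (asAlgebraHom V.ρ)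
  have htrace := trace_asAlgebraHom_setSum_conjClass V x
  rw [hc, Module.algebraMap_end_eq_smul_id, map_smul, LinearMap.trace_id, smul_eq_mul] at htrace
  rw [hc, ← htrace, char_one,
    mul_div_cancel_right₀ _ (by simpa [char_one] using character_one_ne_zero_s1 V)]

lemma asAlgebraHom_prod_setSum_conjClass {n : ℕ} (x : Fin n → G) :
    asAlgebraHom V.ρ (List.ofFn fun i => setSum k (conjClass G (x i))).prod =
      algebraMap k _ (∏ i, Nat.card (conjClass G (x i)) * V.character (x i) / V.character 1) := by
  rw [map_list_prod, List.map_ofFn, ← List.prod_ofFn, map_list_prod, List.map_ofFn]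
  simp only [Function.comp_def, asAlgebraHom_setSum_conjClass]

end FDRep

end Representations

lemma prod_mul_div_eq_div_mul_iff {K : Type*} [Field K] {n : ℕ} (hn : n ≠ 0) {a y : Fin n → K}
    {δ f z : K} (ha : ∏ i, a i ≠ 0) (hδ : δ ≠ 0) (hf : f ≠ 0) :
    ∏ i, a i * y i / f = (∏ i, a i) / δ * (δ * z / f) ↔ ∏ i, y i = f ^ (n - 1) * z := by
  obtain ⟨m, rfl⟩ := Nat.exists_eq_add_one_of_ne_zero hn
  rw [Finset.prod_div_distrib, Finset.prod_mul_distrib, Finset.prod_const, Finset.card_univ,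
    Fintype.card_fin, Nat.add_sub_cancel,
    show (∏ i, a i) / δ * (δ * z / f) = (∏ i, a i) * z / f by field_simp,
    div_eq_div_iff (pow_ne_zero _ hf) hf]
  constructor <;> intro h
  · apply mul_left_cancel₀ (mul_ne_zero ha hf)
    linear_combination h
  · rw [h]
    ring

theorem stmt1 {G : Type} [Group G] [Fintype G] (n : ℕ) (hn : 2 ≤ n)
    (x : Fin n → G) (d : G) :
    (List.ofFn fun i => conjClass G (x i)).prod = conjClass G d ↔
      ∀ (V : FDRep ℂ G), Simple V →
        (∏ i, V.character (x i)) = V.character 1 ^ (n - 1) * V.character d := by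
  set P := (List.ofFn fun i => setSum ℂ (conjClass G (x i))).prod
  set c : ℂ := (∏ i, (Nat.card (conjClass G (x i)) : ℂ)) / Nat.card (conjClass G d)
  calc _ ↔ P = c • setSum ℂ (conjClass G d) := prod_conjClass_eq_conjClass_iff x d
    _ ↔ ∀ V : FDRep ℂ G, Simple V →
          asAlgebraHom V.ρ P = asAlgebraHom V.ρ (c • setSum ℂ (conjClass G d)) :=
        ⟨fun h V _ => by rw [h], eq_of_forall_asAlgebraHom_eq⟩
    _ ↔ _ := forall₂_congr fun V _ => by
        rw [FDRep.asAlgebraHom_prod_setSum_conjClass, map_smul,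
          FDRep.asAlgebraHom_setSum_conjClass, Algebra.smul_def, ← map_mul,
          (FaithfulSMul.algebraMap_injective ℂ (Module.End ℂ V)).eq_iff]
        exact prod_mul_div_eq_div_mul_iff (by omega)
          (Finset.prod_ne_zero_iff.mpr fun i _ => natCast_card_conjClass_ne_zero (x i))
          (natCast_card_conjClass_ne_zero d) (FDRep.character_one_ne_zero_s1 V)
end

section
/- Let K be a conjugacy class of a finite group G such that KK⁻¹ = {1} ∪ D for a conjugacy class D of G. Then |D| divides |K|(|K|−1) and the quotient ⟨K⟩/⟨D⟩ is cyclic. -/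
open Pointwise

section Fibers

variable {M α β : Type*} [Group M] [MulAction M α] [MulAction M β] [DecidableEq β]
  {s : Finset α} {f : α → β}

theorem Finset.card_filter_le_card_filter_smul (hf : ∀ (m : M) a, f (m • a) = m • f a)
    (hs : ∀ (m : M), ∀ a ∈ s, m • a ∈ s) (m : M) (b : β) :
    (s.filter (f · = b)).card ≤ (s.filter (f · = m • b)).card := by
  refine Finset.card_le_card_of_injOn (m • ·) (fun a ha => ?_) (MulAction.injective m).injOn
  simp only [Finset.coe_filter, Set.mem_ofPred_eq] at ha ⊢
  exact ⟨hs m a ha.1, by rw [hf, ha.2]⟩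

theorem Finset.card_dvd_card_of_smul_equivariant (hf : ∀ (m : M) a, f (m • a) = m • f a)
    (hs : ∀ (m : M), ∀ a ∈ s, m • a ∈ s) {t : Finset β} (hst : ∀ a ∈ s, f a ∈ t)
    (ht : ∀ b ∈ t, ∀ b' ∈ t, ∃ m : M, m • b = b') : t.card ∣ s.card := by
  rcases t.eq_empty_or_nonempty with rfl | ⟨b₀, hb₀⟩
  · simp [Finset.eq_empty_of_forall_notMem fun a ha => Finset.notMem_empty _ (hst a ha)]
  have hfiber : ∀ b ∈ t, (s.filter (f · = b)).card = (s.filter (f · = b₀)).card := by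
    intro b hb
    obtain ⟨m, rfl⟩ := ht b₀ hb₀ b hb
    refine le_antisymm ?_ (card_filter_le_card_filter_smul hf hs m b₀)
    simpa using card_filter_le_card_filter_smul hf hs m⁻¹ (m • b₀)
  rw [Finset.card_eq_sum_card_fiberwise hst, Finset.sum_const_nat hfiber]
  exact dvd_mul_right _ _

end Fibers

theorem isCyclic_quotient_of_forall_mk_eq {H : Type*} [Group H] (N : Subgroup H) [N.Normal]
    {S : Set H} (hS : Subgroup.closure S = ⊤) {x : H} (hx : ∀ y ∈ S, (y : H ⧸ N) = x) :
    IsCyclic (H ⧸ N) := by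
  refine isCyclic_iff_exists_zpowers_eq_top.mpr ⟨x, top_unique ?_⟩
  rw [← (QuotientGroup.mk' N).range_eq_top_of_surjective (QuotientGroup.mk'_surjective N),
    MonoidHom.range_eq_map, ← hS, MonoidHom.map_closure, Subgroup.zpowers_eq_closure]
  refine Subgroup.closure_mono ?_
  rintro _ ⟨y, hy, rfl⟩
  exact hx y hy

theorem isCyclic_closure_quotient_of_mul_inv_subset {G : Type*} [Group G] (N : Subgroup G)
    [N.Normal] {K : Set G} {x : G} (hx : x ∈ K) (hK : K * K⁻¹ ⊆ N) :
    IsCyclic (Subgroup.closure K ⧸ N.subgroupOf (Subgroup.closure K)) := by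
  refine isCyclic_quotient_of_forall_mk_eq _ Subgroup.closure_closure_coe_preimage
    (x := ⟨x, Subgroup.subset_closure hx⟩) fun y hy => ?_
  rw [QuotientGroup.eq, Subgroup.mem_subgroupOf]
  exact ‹N.Normal›.mem_comm (hK (Set.mul_mem_mul hx (Set.inv_mem_inv.mpr hy)))

theorem closure_conjClass_eq_normalClosure {G : Type*} [Group G] (d : G) :
    Subgroup.closure (conjClass G d) = Subgroup.normalClosure {d} := by
  rw [Subgroup.normalClosure, Group.conjugatesOfSet, Set.biUnion_singleton]
  rfl

instance closure_conjClass_normal {G : Type*} [Group G] (d : G) :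
    (Subgroup.closure (conjClass G d)).Normal :=
  closure_conjClass_eq_normalClosure d ▸ Subgroup.normalClosure_normal

theorem smul_mem_conjClass {G : Type*} [Group G] {y a : G} (c : ConjAct G)
    (ha : a ∈ conjClass G y) : c • a ∈ conjClass G y :=
  ha.trans (isConj_iff.mpr ⟨ConjAct.ofConjAct c, (ConjAct.smul_def c a).symm⟩)

theorem card_conjClass_dvd_of_mul_inv_mem {G : Type*} [Group G] [Finite G] {x d : G}
    (hK : ∀ a ∈ conjClass G x, ∀ b ∈ conjClass G x, a ≠ b → a * b⁻¹ ∈ conjClass G d) :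
    Nat.card (conjClass G d) ∣ Nat.card (conjClass G x) * (Nat.card (conjClass G x) - 1) := by
  cases nonempty_fintype G
  classical
  rw [Nat.card_eq_card_toFinset, Nat.card_eq_card_toFinset, Nat.mul_sub_one,
    ← Finset.offDiag_card]
  refine Finset.card_dvd_card_of_smul_equivariant (M := ConjAct G)
    (f := fun p : G × G => p.1 * p.2⁻¹)
    (fun c p => by simp only [Prod.smul_fst, Prod.smul_snd, smul_mul', smul_inv'])
    (fun c p hp => ?_) (fun p hp => ?_) (fun b hb b' hb' => ?_)
  · simp only [Finset.mem_offDiag, Set.mem_toFinset] at hp ⊢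
    exact ⟨smul_mem_conjClass c hp.1, smul_mem_conjClass c hp.2.1,
      (MulAction.injective c).ne hp.2.2⟩
  · simp only [Finset.mem_offDiag, Set.mem_toFinset] at hp ⊢
    exact hK _ hp.1 _ hp.2.1 hp.2.2
  · simp only [Set.mem_toFinset] at hb hb'
    obtain ⟨c, rfl⟩ := isConj_iff.mp (hb.symm.trans hb')
    exact ⟨ConjAct.toConjAct c, ConjAct.smul_def _ _⟩

theorem stmt3 {G : Type*} [Group G] [Fintype G] (x d : G)
    (h : conjClass G x * (conjClass G x)⁻¹ = {1} ∪ conjClass G d) :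
    Nat.card (conjClass G d) ∣ Nat.card (conjClass G x) * (Nat.card (conjClass G x) - 1) ∧
    ∃ hn : ((Subgroup.closure (conjClass G d)).subgroupOf
        (Subgroup.closure (conjClass G x))).Normal,
      letI := hn
      IsCyclic (Subgroup.closure (conjClass G x) ⧸
        (Subgroup.closure (conjClass G d)).subgroupOf (Subgroup.closure (conjClass G x))) := by
  refine ⟨card_conjClass_dvd_of_mul_inv_mem fun a ha b hb hab => ?_, inferInstance,
    isCyclic_closure_quotient_of_mul_inv_subset _ (IsConj.refl x) ?_⟩
  · have hmem := h ▸ Set.mul_mem_mul ha (Set.inv_mem_inv.mpr hb)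
    exact hmem.resolve_left (mul_inv_eq_one.not.mpr hab)
  · rw [h]
    exact Set.union_subset (Set.singleton_subset_iff.mpr (Subgroup.one_mem _))
      Subgroup.subset_closure
end

section
/- Let K be a conjugacy class of a finite group G with KK⁻¹ = {1} ∪ D for a conjugacy class D, and suppose |D| = |K|(|K|−1). Then ⟨K⟩ is abelian. -/
open Pointwise

/-!
Since `|K| (|K| - 1) ≠ 1`, `D ≠ {1}`, so `1 ∉ D`. Hence `(a, b) ↦ a * b⁻¹` maps the off-diagonal
pairs of `K × K` onto `D`, and as both sets have `|K| (|K| - 1)` elements, the map is injective.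
If `a, b ∈ K` did not commute, the two distinct off-diagonal pairs `(a * b * a⁻¹, b)` and
`(a, b * a * b⁻¹)` would have the same image, the commutator `a * b * a⁻¹ * b⁻¹`.
-/

theorem Set.ncard_offDiag {α : Type*} {s : Set α} (hs : s.Finite) :
    s.offDiag.ncard = s.ncard * (s.ncard - 1) := by
  obtain ⟨t, rfl⟩ := hs.exists_finset_coe
  rw [← Finset.coe_offDiag, Set.ncard_coe_finset, Set.ncard_coe_finset, Finset.offDiag_card,
    Nat.mul_sub_one]

section OffDiag

variable {G : Type*} [Group G] {K D : Set G}

theorem image_mul_inv_offDiag (h : K * K⁻¹ = {1} ∪ D) (h1 : (1 : G) ∉ D) :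
    (fun p : G × G => p.1 * p.2⁻¹) '' K.offDiag = D := by
  ext c
  constructor
  · rintro ⟨⟨a, b⟩, ⟨ha, hb, hab⟩, rfl⟩
    have hmem : a * b⁻¹ ∈ K * K⁻¹ := Set.mul_mem_mul ha (Set.inv_mem_inv.mpr hb)
    rw [h] at hmem
    exact hmem.resolve_left fun h' => hab (mul_inv_eq_one.mp h')
  · intro hc
    obtain ⟨a, ha, b, hb, rfl⟩ : c ∈ K * K⁻¹ := h ▸ Or.inr hc
    refine ⟨(a, b⁻¹), ⟨ha, hb, fun (hab : a = b⁻¹) => h1 ?_⟩, by simp⟩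
    simpa [mul_eq_one_iff_eq_inv.mpr hab] using hc

theorem injOn_mul_inv_offDiag (hK : K.Finite) (h : K * K⁻¹ = {1} ∪ D) (h1 : (1 : G) ∉ D)
    (hcard : D.ncard = K.ncard * (K.ncard - 1)) :
    K.offDiag.InjOn fun p : G × G => p.1 * p.2⁻¹ :=
  Set.injOn_of_ncard_image_eq (by rw [image_mul_inv_offDiag h h1, hcard, Set.ncard_offDiag hK])
    (hK.offDiag)

theorem mul_comm_of_injOn_mul_inv_offDiag (hconj : ∀ a ∈ K, ∀ g : G, g * a * g⁻¹ ∈ K)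
    (hinj : K.offDiag.InjOn fun p : G × G => p.1 * p.2⁻¹) {a b : G} (ha : a ∈ K) (hb : b ∈ K) :
    a * b = b * a := by
  by_contra hab
  have hp : (a * b * a⁻¹, b) ∈ K.offDiag :=
    ⟨hconj b hb a, hb, fun h => hab (mul_inv_eq_iff_eq_mul.mp h)⟩
  have hq : (a, b * a * b⁻¹) ∈ K.offDiag :=
    ⟨ha, hconj a ha b, fun h => hab (eq_mul_inv_iff_mul_eq.mp h)⟩
  have hpq := congrArg Prod.fst (hinj hp hq (by simp only; group))
  simp only [mul_inv_eq_iff_eq_mul, mul_left_cancel_iff] at hpq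
  exact hab (by rw [hpq])

end OffDiag

theorem conjClass_conj_mem {G : Type*} [Group G] {x a : G} (ha : a ∈ conjClass G x) (g : G) :
    g * a * g⁻¹ ∈ conjClass G x :=
  IsConj.trans ha (isConj_iff.mpr ⟨g, rfl⟩)

theorem stmt4 {G : Type*} [Group G] [Fintype G] (x d : G)
    (h : conjClass G x * (conjClass G x)⁻¹ = {1} ∪ conjClass G d)
    (hcard : Nat.card (conjClass G d) =
      Nat.card (conjClass G x) * (Nat.card (conjClass G x) - 1)) :
    IsMulCommutative (Subgroup.closure (conjClass G x)) := by
  rw [Nat.card_coe_set_eq, Nat.card_coe_set_eq] at hcard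
  have h1 : (1 : G) ∉ conjClass G d := by
    intro (hd : IsConj d 1)
    have hD : conjClass G d = {1} := by
      ext y
      simp [conjClass, isConj_one_left.mp hd]
    rw [hD, Set.ncard_singleton] at hcard
    have hK := Nat.eq_one_of_mul_eq_one_right hcard.symm
    simp [hK] at hcard
  have hinj := injOn_mul_inv_offDiag (Set.toFinite _) h h1 hcard
  exact Subgroup.isMulCommutative_closure fun a ha b hb =>
    mul_comm_of_injOn_mul_inv_offDiag (fun _ hc => conjClass_conj_mem hc) hinj ha hb
end

section
/- Let G be a finite group and K = x^G a conjugacy class such that K² is a conjugacy class. Then K = x[x,G] and C_G(x) = C_G(x²), where [x,G] is the subgroup generated by commutators [x,g] for g ∈ G. -/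
open Pointwise

/-- The subgroup `[x,G]` generated by the commutators `[x,g] = x⁻¹ · x^g` for `g ∈ G`. -/
def commSub {G : Type*} [Group G] (x : G) : Subgroup G :=
  Subgroup.closure {z | ∃ g : G, z = x⁻¹ * (g⁻¹ * x * g)}

/-!
Write `K = x^G`. Since `x² ∈ K²`, the class `K²` is `(x²)^G`, and it contains `xK`. Hence
`|K| = |xK| ≤ |K²| = |G : C_G(x²)| ≤ |G : C_G(x)| = |K|`, the last inequality because
`C_G(x) ≤ C_G(x²)`. So both inequalities are equalities: `xK = K²` and `C_G(x) = C_G(x²)`.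
From `xK = K²` and the conjugation invariance of `K`, the set `x⁻¹K` of commutators `[x,g]` is
closed under multiplication; in a finite group it is therefore a subgroup, namely `[x,G]`.
-/

namespace Subgroup

variable {G : Type*} [Group G] [Finite G]

theorem coe_closure_eq_self_of_mul_mem {S : Set G} (hone : 1 ∈ S)
    (hmul : ∀ a ∈ S, ∀ b ∈ S, a * b ∈ S) : (closure S : Set G) = S := by
  let M : Submonoid G := ⟨⟨S, fun ha hb => hmul _ ha _ hb⟩, hone⟩
  calc (closure S : Set G) = (Submonoid.closure (M : Set G) : Set G) := by
        rw [← closure_toSubmonoid_of_finite]; rfl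
    _ = S := by rw [Submonoid.closure_eq]; rfl

end Subgroup

section ConjClass

variable {G : Type*} [Group G]

theorem mem_conjClass_self (x : G) : x ∈ conjClass G x := IsConj.refl x

theorem conjClass_eq_of_mem {x y : G} (h : y ∈ conjClass G x) : conjClass G y = conjClass G x :=
  Set.ext fun _ => ⟨h.trans, h.symm.trans⟩

theorem conj_mem_conjClass {x y : G} (g : G) (h : y ∈ conjClass G x) :
    g * y * g⁻¹ ∈ conjClass G x :=
  h.trans (isConj_iff.mpr ⟨g, rfl⟩)

theorem ncard_conjClass (x : G) :
    (conjClass G x).ncard = (Subgroup.centralizer {x}).index := by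
  have horbit : conjClass G x = MulAction.orbit (ConjAct G) x :=
    Set.ext fun _ => ConjAct.mem_orbit_conjAct.trans isConj_comm |>.symm
  rw [horbit, ← MulAction.index_stabilizer, Subgroup.centralizer_eq_comap_stabilizer]
  exact (Subgroup.index_comap_of_surjective _ (MulEquiv.surjective _)).symm

theorem centralizer_le_centralizer_pow (x : G) (n : ℕ) :
    Subgroup.centralizer {x} ≤ Subgroup.centralizer {x ^ n} := fun g hg => by
  rw [Subgroup.mem_centralizer_singleton_iff] at hg ⊢
  exact (Commute.pow_left hg.symm n).symm

theorem conjClass_sq_eq_of_eq {x d : G} (h : conjClass G x ^ 2 = conjClass G d) :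
    conjClass G x ^ 2 = conjClass G (x ^ 2) := by
  have hx2 : x ^ 2 ∈ conjClass G d := by
    rw [← h, sq, sq]
    exact Set.mul_mem_mul (mem_conjClass_self x) (mem_conjClass_self x)
  rw [h, conjClass_eq_of_mem hx2]

theorem smul_conjClass_subset_sq (x : G) : x • conjClass G x ⊆ conjClass G x ^ 2 := by
  rintro _ ⟨k, hk, rfl⟩
  rw [sq]
  exact Set.mul_mem_mul (mem_conjClass_self x) hk

theorem smul_conjClass_eq_sq_and_centralizer_eq [Finite G] {x : G}
    (h : conjClass G x ^ 2 = conjClass G (x ^ 2)) :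
    x • conjClass G x = conjClass G x ^ 2 ∧
      Subgroup.centralizer {x} = Subgroup.centralizer {x ^ 2} := by
  have hle := centralizer_le_centralizer_pow x 2
  have hcard : (conjClass G x).ncard = (conjClass G x ^ 2).ncard := by
    refine le_antisymm ?_ ?_
    · rw [← Set.ncard_smul_set x]
      exact Set.ncard_le_ncard (smul_conjClass_subset_sq x) (Set.toFinite _)
    · rw [h, ncard_conjClass, ncard_conjClass]
      exact Subgroup.index_antitone hle
  refine ⟨Set.eq_of_subset_of_ncard_le (smul_conjClass_subset_sq x) ?_ (Set.toFinite _), ?_⟩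
  · rw [Set.ncard_smul_set, hcard]
  · by_contra hne
    have hindex : (Subgroup.centralizer {x ^ 2}).index = (Subgroup.centralizer {x}).index := by
      rw [← ncard_conjClass, ← ncard_conjClass, ← h, hcard]
    exact (Subgroup.index_strictAnti (lt_of_le_of_ne hle hne)).ne hindex

theorem mem_inv_smul_conjClass_iff {x z : G} :
    z ∈ x⁻¹ • conjClass G x ↔ ∃ g : G, z = x⁻¹ * (g⁻¹ * x * g) := by
  rw [Set.mem_inv_smul_set_iff, smul_eq_mul]
  constructor
  · intro hz
    obtain ⟨c, hc⟩ := isConj_iff.mp hz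
    exact ⟨c⁻¹, by rw [inv_inv, hc, inv_mul_cancel_left]⟩
  · rintro ⟨g, rfl⟩
    rw [mul_inv_cancel_left]
    exact isConj_iff.mpr ⟨g⁻¹, by group⟩

/-- Uses `x(ab) = x⁻¹ · x(xa)x⁻¹ · xb ∈ x⁻¹K² = K`. -/
theorem inv_smul_conjClass_mul_mem {x a b : G} (h : x • conjClass G x = conjClass G x ^ 2)
    (ha : a ∈ x⁻¹ • conjClass G x) (hb : b ∈ x⁻¹ • conjClass G x) :
    a * b ∈ x⁻¹ • conjClass G x := by
  rw [Set.mem_inv_smul_set_iff, smul_eq_mul] at ha hb ⊢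
  have hprod : x * (x * a) * x⁻¹ * (x * b) ∈ x • conjClass G x := by
    rw [h, sq]
    exact Set.mul_mem_mul (conj_mem_conjClass x ha) hb
  obtain ⟨k, hk, hkeq⟩ := hprod
  change x * k = _ at hkeq
  rw [show x * (x * a) * x⁻¹ * (x * b) = x * (x * (a * b)) by group] at hkeq
  exact mul_left_cancel hkeq ▸ hk

theorem coe_commSub_eq_inv_smul_conjClass [Finite G] {x : G}
    (h : x • conjClass G x = conjClass G x ^ 2) :
    (commSub x : Set G) = x⁻¹ • conjClass G x := by
  have hS : {z | ∃ g : G, z = x⁻¹ * (g⁻¹ * x * g)} = x⁻¹ • conjClass G x :=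
    Set.ext fun _ => mem_inv_smul_conjClass_iff.symm
  rw [commSub, hS]
  refine Subgroup.coe_closure_eq_self_of_mul_mem ?_ fun a ha b hb =>
    inv_smul_conjClass_mul_mem h ha hb
  rw [Set.mem_inv_smul_set_iff, smul_eq_mul, mul_one]
  exact mem_conjClass_self x

end ConjClass

theorem stmt6 {G : Type*} [Group G] [Fintype G] (x : G)
    (h : ∃ d : G, (conjClass G x) ^ 2 = conjClass G d) :
    conjClass G x = x • (commSub x : Set G) ∧
      Subgroup.centralizer {x} = Subgroup.centralizer {x ^ 2} := by
  obtain ⟨d, hd⟩ := h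
  obtain ⟨hsmul, hcent⟩ := smul_conjClass_eq_sq_and_centralizer_eq (conjClass_sq_eq_of_eq hd)
  rw [coe_commSub_eq_inv_smul_conjClass hsmul, smul_inv_smul]
  exact ⟨rfl, hcent⟩
end

section
/- Let G be a finite group and K = x^G a nontrivial conjugacy class. Then K² ≠ K. -/
open Pointwise

theorem stmt7 {G : Type*} [Group G] [Fintype G] (x : G) (hx : x ≠ 1) :
    (conjClass G x) ^ 2 ≠ conjClass G x := by
  intro h
  have hmul : ∀ a b : G, a ∈ conjClass G x → b ∈ conjClass G x → a * b ∈ conjClass G x := by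
    intro a b ha hb
    rw [← h, sq]
    exact Set.mul_mem_mul ha hb
  have hx1 : x ∈ conjClass G x := IsConj.refl x
  have hpow : ∀ n : ℕ, x ^ (n + 1) ∈ conjClass G x := by
    intro n
    induction n with
    | zero => simpa using hx1
    | succ k ih => rw [pow_succ]; exact hmul _ _ ih hx1
  have hord : 0 < orderOf x := orderOf_pos x
  obtain ⟨m, hm⟩ : ∃ m, orderOf x = m + 1 := ⟨orderOf x - 1, by omega⟩
  have h1 : (1 : G) ∈ conjClass G x := by
    have := hpow m
    rwa [← hm, pow_orderOf_eq_one] at this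
  have h2 : IsConj x 1 := h1
  exact hx (isConj_one_right.mp h2.symm)
end

section
/- Let G be a finite group, K = x^G, and n ≥ 2. Then K^n is a conjugacy class if and only if C_G(x) = C_G(x^n) and x⁻¹K = [x,G] is a normal subgroup of G (equal to K⁻¹K). -/
open Pointwise

lemma mem_cc {G : Type*} [Group G] {x b : G} :
    b ∈ conjClass G x ↔ ∃ c : G, c * x * c⁻¹ = b := by
  simp [conjClass, isConj_iff]

lemma image_pow_cc {G : Type*} [Group G] (x : G) (n : ℕ) :
    (fun k => k ^ n) '' conjClass G x = conjClass G (x ^ n) := by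
  ext b
  constructor
  · rintro ⟨k, hk, rfl⟩
    obtain ⟨c, rfl⟩ := mem_cc.mp hk
    exact mem_cc.mpr ⟨c, conj_pow.symm⟩
  · intro hb
    obtain ⟨c, rfl⟩ := mem_cc.mp hb
    exact ⟨c * x * c⁻¹, mem_cc.mpr ⟨c, rfl⟩, conj_pow⟩

lemma injOn_of_centralizer {G : Type*} [Group G] {x : G} {n : ℕ}
    (hC : Subgroup.centralizer {x} = Subgroup.centralizer {x ^ n}) :
    Set.InjOn (fun k => k ^ n) (conjClass G x) := by
  rintro a ha b hb hab
  obtain ⟨c, rfl⟩ := mem_cc.mp ha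
  obtain ⟨e, rfl⟩ := mem_cc.mp hb
  simp only [conj_pow] at hab
  have h1 : (e⁻¹ * c) ∈ Subgroup.centralizer {x ^ n} := by
    rw [Subgroup.mem_centralizer_singleton_iff]
    calc (e⁻¹ * c) * x ^ n = e⁻¹ * (c * x ^ n * c⁻¹) * c := by group
    _ = e⁻¹ * (e * x ^ n * e⁻¹) * c := by rw [hab]
    _ = x ^ n * (e⁻¹ * c) := by group
  rw [← hC, Subgroup.mem_centralizer_singleton_iff] at h1
  calc c * x * c⁻¹ = e * ((e⁻¹ * c) * x * (e⁻¹ * c)⁻¹) * e⁻¹ := by group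
  _ = e * (x * (e⁻¹ * c) * (e⁻¹ * c)⁻¹) * e⁻¹ := by rw [← h1]
  _ = e * x * e⁻¹ := by group

lemma centralizer_of_injOn {G : Type*} [Group G] {x : G} {n : ℕ}
    (hinj : Set.InjOn (fun k => k ^ n) (conjClass G x)) :
    Subgroup.centralizer {x} = Subgroup.centralizer {x ^ n} := by
  apply le_antisymm
  · intro c hc
    rw [Subgroup.mem_centralizer_singleton_iff] at hc ⊢
    exact Commute.pow_right hc n
  · intro c hc
    rw [Subgroup.mem_centralizer_singleton_iff] at hc ⊢
    have hk : c * x * c⁻¹ ∈ conjClass G x := mem_cc.mpr ⟨c, rfl⟩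
    have hx : x ∈ conjClass G x := mem_cc.mpr ⟨1, by group⟩
    have hpow : (fun k => k ^ n) (c * x * c⁻¹) = (fun k => k ^ n) x := by
      simp only [conj_pow]
      calc c * x ^ n * c⁻¹ = (x ^ n * c) * c⁻¹ := by rw [← hc]
      _ = x ^ n := by group
    have h4 : c * x * c⁻¹ = x := hinj hk hx hpow
    calc c * x = (c * x * c⁻¹) * c := by group
    _ = x * c := by rw [h4]

theorem stmt10 {G : Type*} [Group G] [Fintype G] (x : G) (n : ℕ) (hn : 2 ≤ n) :
    (∃ d : G, (conjClass G x) ^ n = conjClass G d) ↔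
      (Subgroup.centralizer {x} = Subgroup.centralizer {x ^ n} ∧
        x⁻¹ • conjClass G x = (commSub x : Set G) ∧
        x⁻¹ • conjClass G x = (conjClass G x)⁻¹ * conjClass G x ∧
        (commSub x).Normal) := by
  constructor
  · rintro ⟨d, hd⟩
    obtain ⟨m, rfl⟩ : ∃ m, n = m + 2 := ⟨n - 2, by omega⟩
    set K := conjClass G x with hKdef
    have hxK : x ∈ K := mem_cc.mpr ⟨1, by group⟩
    have hfin : K.Finite := Set.toFinite _
    -- the product is the class of x^n
    have hxnK : x ^ (m + 2) ∈ K ^ (m + 2) := Set.pow_mem_pow hxK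
    have hdx : conjClass G d = conjClass G (x ^ (m + 2)) := by
      have h1 : IsConj d (x ^ (m + 2)) := by rw [hd] at hxnK; exact hxnK
      ext b; exact ⟨fun hb => h1.symm.trans hb, fun hb => h1.trans hb⟩
    have hKn : K ^ (m + 2) = conjClass G (x ^ (m + 2)) := hd.trans hdx
    have himg : (fun k => k ^ (m + 2)) '' K = conjClass G (x ^ (m + 2)) :=
      image_pow_cc x (m + 2)
    -- cardinality chain
    have c1 : (conjClass G (x ^ (m + 2))).ncard ≤ K.ncard := by
      rw [← himg]; exact Set.ncard_image_le hfin
    have sub1 : x ^ (m + 1) • K ⊆ K ^ (m + 2) := by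
      intro b hb
      rw [Set.mem_smul_set] at hb
      obtain ⟨k, hk, rfl⟩ := hb
      rw [pow_succ K (m + 1)]
      exact Set.mul_mem_mul (Set.pow_mem_pow hxK) hk
    have c2 : K.ncard ≤ (K ^ (m + 2)).ncard := by
      calc K.ncard = (x ^ (m + 1) • K).ncard := (Set.ncard_smul_set _ _).symm
      _ ≤ _ := Set.ncard_le_ncard sub1 (Set.toFinite _)
    have cKn : (K ^ (m + 2)).ncard = K.ncard := by
      apply le_antisymm _ c2
      rw [hKn]; exact c1
    -- centralizer condition
    have hinj : Set.InjOn (fun k => k ^ (m + 2)) K := by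
      apply Set.injOn_of_ncard_image_eq _ hfin
      rw [himg, ← hKn, cKn]
    have hcent := centralizer_of_injOn hinj
    -- K*K = xK = Kx
    have subxK : x • K ⊆ K * K := by
      intro b hb
      rw [Set.mem_smul_set] at hb
      obtain ⟨k, hk, rfl⟩ := hb
      exact Set.mul_mem_mul hxK hk
    have subKx : K * {x} ⊆ K * K :=
      Set.mul_subset_mul_left (Set.singleton_subset_iff.mpr hxK)
    have subKK : K * K * {x ^ m} ⊆ K ^ (m + 2) := by
      have he : K ^ (m + 2) = K * K * K ^ m := by
        rw [pow_succ' K (m + 1), pow_succ' K m, mul_assoc]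
      rw [he]
      exact Set.mul_subset_mul_left (Set.singleton_subset_iff.mpr (Set.pow_mem_pow hxK))
    have cKK : (K * K).ncard ≤ K.ncard := by
      calc (K * K).ncard = (K * K * {x ^ m}).ncard := by
            rw [Set.mul_singleton]
            exact (Set.ncard_image_of_injective _ (mul_left_injective _)).symm
      _ ≤ (K ^ (m + 2)).ncard := Set.ncard_le_ncard subKK (Set.toFinite _)
      _ = K.ncard := cKn
    have hKK1 : x • K = K * K :=
      Set.eq_of_subset_of_ncard_le subxK
        (by rw [Set.ncard_smul_set]; exact cKK) (Set.toFinite _)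
    have hKK2 : K * {x} = K * K :=
      Set.eq_of_subset_of_ncard_le subKx
        (by rw [Set.mul_singleton,
              Set.ncard_image_of_injective _ (mul_left_injective _)]; exact cKK)
        (Set.toFinite _)
    -- key multiplicative closure of H = x⁻¹ • K
    have key : ∀ a ∈ K, ∀ b ∈ K, a * x⁻¹ * b ∈ K := by
      intro a ha b hb
      have h1 : b * x ∈ x • K := by
        rw [hKK1, ← hKK2]
        exact Set.mul_mem_mul hb rfl
      rw [Set.mem_smul_set] at h1
      obtain ⟨b', hb', hbe⟩ := h1
      have hbe' : x * b' = b * x := hbe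
      have hb'' : b' = x⁻¹ * (b * x) := by rw [← hbe']; group
      have h2 : a * b' ∈ K * {x} := by
        rw [hKK2]; exact Set.mul_mem_mul ha hb'
      rw [Set.mul_singleton] at h2
      obtain ⟨k, hk, hke⟩ := h2
      have hke' : k * x = a * b' := hke
      have : a * x⁻¹ * b = k := by
        calc a * x⁻¹ * b = a * (x⁻¹ * (b * x)) * x⁻¹ := by group
        _ = a * b' * x⁻¹ := by rw [← hb'']
        _ = (k * x) * x⁻¹ := by rw [← hke']
        _ = k := by group
      rwa [this]
    set H := x⁻¹ • K with hHdef
    have h1H : (1 : G) ∈ H := ⟨x, hxK, by simp⟩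
    have hmulH : ∀ a ∈ H, ∀ b ∈ H, a * b ∈ H := by
      rintro a ⟨k₁, hk₁, rfl⟩ b ⟨k₂, hk₂, rfl⟩
      refine ⟨k₁ * x⁻¹ * k₂, key _ hk₁ _ hk₂, ?_⟩
      show x⁻¹ * (k₁ * x⁻¹ * k₂) = (x⁻¹ * k₁) * (x⁻¹ * k₂)
      group
    have hpowH : ∀ a ∈ H, ∀ k : ℕ, a ^ (k + 1) ∈ H := by
      intro a ha k
      induction k with
      | zero => simpa using ha
      | succ k ih => rw [pow_succ]; exact hmulH _ ih _ ha
    have hinvH : ∀ a ∈ H, a⁻¹ ∈ H := by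
      intro a ha
      have hord : 0 < orderOf a := orderOf_pos a
      rcases Nat.lt_or_ge (orderOf a) 2 with h | h
      · have h1 : orderOf a = 1 := by omega
        rw [orderOf_eq_one_iff.mp h1, inv_one]
        exact h1H
      · obtain ⟨k, hk⟩ : ∃ k, orderOf a = k + 2 := ⟨orderOf a - 2, by omega⟩
        have hpow : a * a ^ (k + 1) = 1 := by
          rw [← pow_succ']
          rw [show k + 1 + 1 = orderOf a from by omega]
          exact pow_orderOf_eq_one a
        rw [(inv_eq_of_mul_eq_one_right hpow)]
        exact hpowH a ha k
    have hconjK : ∀ k ∈ K, ∀ g : G, g * k * g⁻¹ ∈ K := by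
      intro k hk g
      obtain ⟨c, rfl⟩ := mem_cc.mp hk
      exact mem_cc.mpr ⟨g * c, by group⟩
    -- H is the subgroup commSub x
    let H' : Subgroup G :=
      { carrier := H
        one_mem' := h1H
        mul_mem' := fun ha hb => hmulH _ ha _ hb
        inv_mem' := fun ha => hinvH _ ha }
    have hSH : {z | ∃ g : G, z = x⁻¹ * (g⁻¹ * x * g)} = H := by
      ext z
      simp only [Set.mem_setOf_eq]
      constructor
      · rintro ⟨g, rfl⟩
        exact ⟨g⁻¹ * x * g, mem_cc.mpr ⟨g⁻¹, by group⟩, rfl⟩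
      · rintro ⟨k, hk, rfl⟩
        obtain ⟨c, rfl⟩ := mem_cc.mp hk
        exact ⟨c⁻¹, by show x⁻¹ * (c * x * c⁻¹) = _; group⟩
    have hcomm' : commSub x = H' := by
      rw [commSub, hSH]
      exact Subgroup.closure_eq H'
    have hCS : x⁻¹ • K = (commSub x : Set G) := by rw [hcomm']; rfl
    refine ⟨hcent, hCS, ?_, ?_⟩
    · -- x⁻¹ • K = K⁻¹ * K
      apply Set.Subset.antisymm
      · rintro z ⟨k, hk, rfl⟩
        exact Set.mul_mem_mul (Set.inv_mem_inv.mpr hxK) hk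
      · rintro z hz
        rw [Set.mem_mul] at hz
        obtain ⟨a, ha, b, hb, rfl⟩ := hz
        rw [Set.mem_inv] at ha
        have h1 : x⁻¹ * a⁻¹ ∈ H := ⟨a⁻¹, ha, rfl⟩
        have h2 : x⁻¹ * b ∈ H := ⟨b, hb, rfl⟩
        have h3 : (x⁻¹ * a⁻¹)⁻¹ * (x⁻¹ * b) ∈ H := hmulH _ (hinvH _ h1) _ h2
        have he : (x⁻¹ * a⁻¹)⁻¹ * (x⁻¹ * b) = a * b := by group
        rwa [he] at h3
    · -- normality
      rw [hcomm']
      constructor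
      rintro h ⟨k, hk, rfl⟩ g
      have hy : x⁻¹ * (g * x * g⁻¹) ∈ H := ⟨g * x * g⁻¹, mem_cc.mpr ⟨g, rfl⟩, rfl⟩
      have hk' : x⁻¹ * (g * k * g⁻¹) ∈ H := ⟨g * k * g⁻¹, hconjK k hk g, rfl⟩
      have h3 : (x⁻¹ * (g * x * g⁻¹))⁻¹ * (x⁻¹ * (g * k * g⁻¹)) ∈ H :=
        hmulH _ (hinvH _ hy) _ hk'
      have he : (x⁻¹ * (g * x * g⁻¹))⁻¹ * (x⁻¹ * (g * k * g⁻¹)) = g * (x⁻¹ • k) * g⁻¹ := by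
        show _ = g * (x⁻¹ * k) * g⁻¹
        group
      rwa [he] at h3
  · rintro ⟨hC, hH, -, hNor⟩
    set K := conjClass G x with hKdef
    set N := commSub x with hNdef
    have hxK : x ∈ K := mem_cc.mpr ⟨1, by group⟩
    have hKxN : K = x • (N : Set G) := by rw [← hH, smul_inv_smul]
    have hpow : ∀ m : ℕ, K ^ (m + 1) = x ^ (m + 1) • (N : Set G) := by
      intro m
      induction m with
      | zero => simpa [pow_one] using hKxN
      | succ m ih =>
        rw [pow_succ, ih]
        ext b
        constructor
        · intro hb
          rw [Set.mem_mul] at hb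
          obtain ⟨a, ha, c, hc, rfl⟩ := hb
          rw [Set.mem_smul_set] at ha
          obtain ⟨n₁, hn₁, rfl⟩ := ha
          rw [hKxN, Set.mem_smul_set] at hc
          obtain ⟨n₂, hn₂, rfl⟩ := hc
          rw [Set.mem_smul_set]
          refine ⟨(x⁻¹ * n₁ * x) * n₂, ?_, ?_⟩
          · have hmem : x⁻¹ * n₁ * x ∈ N := by
              have := hNor.conj_mem n₁ hn₁ x⁻¹
              simpa using this
            exact N.mul_mem hmem hn₂
          · show x ^ (m + 2) * ((x⁻¹ * n₁ * x) * n₂) = (x ^ (m + 1) * n₁) * (x * n₂)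
            rw [pow_succ]
            group
        · intro hb
          rw [Set.mem_smul_set] at hb
          obtain ⟨nn, hnn, rfl⟩ := hb
          rw [Set.mem_mul]
          refine ⟨x ^ (m + 1) * (x * nn * x⁻¹),
            Set.mem_smul_set.mpr ⟨x * nn * x⁻¹, hNor.conj_mem nn hnn x, rfl⟩,
            x, hxK, ?_⟩
          show x ^ (m + 1) * (x * nn * x⁻¹) * x = x ^ (m + 2) * nn
          rw [pow_succ]
          group
    obtain ⟨m, rfl⟩ : ∃ m, n = m + 1 := ⟨n - 1, by omega⟩
    refine ⟨x ^ (m + 1), ?_⟩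
    have hKn : K ^ (m + 1) = x ^ (m + 1) • (N : Set G) := hpow m
    have hinj : Set.InjOn (fun k => k ^ (m + 1)) K := injOn_of_centralizer hC
    have himg : (fun k => k ^ (m + 1)) '' K = conjClass G (x ^ (m + 1)) :=
      image_pow_cc x (m + 1)
    have hsub : conjClass G (x ^ (m + 1)) ⊆ K ^ (m + 1) := by
      intro b hb
      obtain ⟨c, rfl⟩ := mem_cc.mp hb
      have he : c * x ^ (m + 1) * c⁻¹ = (c * x * c⁻¹) ^ (m + 1) := conj_pow.symm
      rw [he]
      exact Set.pow_mem_pow (mem_cc.mpr ⟨c, rfl⟩)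
    have c1 : (K ^ (m + 1)).ncard = K.ncard := by
      rw [hKn, Set.ncard_smul_set, hKxN, Set.ncard_smul_set]
    have c2 : (conjClass G (x ^ (m + 1))).ncard = K.ncard := by
      rw [← himg, Set.ncard_image_of_injOn hinj]
    exact (Set.eq_of_subset_of_ncard_le hsub (by rw [c1, c2]) (Set.toFinite _)).symm
end

section
/- Let G be a finite group and K = x^G such that K^n is a conjugacy class for some n ≥ 2. Then K^m is a conjugacy class for every m ∈ ℕ with gcd(m, o(x)) = 1. -/
/-! Write `K = x^G`. Since `x^n ∈ K^n`, the class `K^n` is `(x^n)^G`, the image of `K` under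
`z ↦ z^n`, so `|K^2| ≤ |K^n| ≤ |K|`. As `xK ⊆ K^2`, this forces `K^2 = xK`, hence
`K^(m+1) = x^m K` has `|K|` elements. For `m` coprime to `o(x)` the map `z ↦ z^m` is injective on
`K`, so its image `(x^m)^G ⊆ K^m` also has `|K|` elements and fills `K^m`. -/

open Pointwise

section

variable {G : Type*} [Group G]

lemma conjClass_eq_conjugatesOf (a : G) : conjClass G a = conjugatesOf a := rfl

lemma image_pow_conjugatesOf (x : G) (j : ℕ) :
    (· ^ j) '' conjugatesOf x = conjugatesOf (x ^ j) := by
  ext y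
  simp only [Set.mem_image, conjugatesOf, Set.mem_ofPred_eq, isConj_iff]
  constructor
  · rintro ⟨z, ⟨g, rfl⟩, rfl⟩
    exact ⟨g, (conj_pow ..).symm⟩
  · rintro ⟨g, rfl⟩
    exact ⟨g * x * g⁻¹, ⟨g, rfl⟩, conj_pow ..⟩

/-- Two conjugates of `x` with the same `m`-th power differ by an element centralising `x ^ m`,
hence `x`, which is a power of `x ^ m`. -/
lemma pow_injOn_conjugatesOf {x : G} {m : ℕ} (hm : m.Coprime (orderOf x)) :
    Set.InjOn (· ^ m) (conjugatesOf x) := by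
  intro z hz w hw hzw
  obtain ⟨g, rfl⟩ := isConj_iff.mp hz
  obtain ⟨h, rfl⟩ := isConj_iff.mp hw
  simp only [conj_pow] at hzw
  obtain ⟨b, hb⟩ := exists_pow_eq_self_of_coprime hm
  have hc : Commute (h⁻¹ * g) (x ^ m) :=
    calc h⁻¹ * g * x ^ m = h⁻¹ * (g * x ^ m * g⁻¹) * g := by group
      _ = h⁻¹ * (h * x ^ m * h⁻¹) * g := by rw [hzw]
      _ = x ^ m * (h⁻¹ * g) := by group
  have hcx : Commute (h⁻¹ * g) x := hb ▸ hc.pow_right b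
  calc g * x * g⁻¹ = h * (h⁻¹ * g * x) * g⁻¹ := by group
    _ = h * (x * (h⁻¹ * g)) * g⁻¹ := by rw [hcx.eq]
    _ = h * x * h⁻¹ := by group

lemma Set.mul_eq_smul_of_ncard_le {A B : Set G} {a : G} (ha : a ∈ A) (hAB : (A * B).Finite)
    (h : (A * B).ncard ≤ B.ncard) : A * B = a • B :=
  (Set.eq_of_subset_of_ncard_le (Set.smul_set_subset_mul ha) (by rwa [Set.ncard_smul_set])
    hAB).symm

lemma Set.ncard_le_ncard_mul_of_mem {A B : Set G} {b : G} (hb : b ∈ B) (hAB : (A * B).Finite) :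
    A.ncard ≤ (A * B).ncard := by
  rw [← Set.ncard_image_of_injective A (mul_left_injective b)]
  exact Set.ncard_le_ncard (Set.image_subset_iff.mpr fun a ha => Set.mul_mem_mul ha hb) hAB

lemma Set.pow_succ_eq_smul_of_sq_eq_smul {M : Type*} [Monoid M] {K : Set M} {x : M}
    (h : K ^ 2 = x • K) (m : ℕ) : K ^ (m + 1) = x ^ m • K := by
  induction m with
  | zero => simp
  | succ k ih => rw [pow_succ, ih, smul_mul_assoc, ← sq, h, smul_smul, ← pow_succ]

section Finite

variable [Finite G] {x : G}

lemma sq_conjugatesOf_eq_smul {n : ℕ} (hn : 2 ≤ n) {d : G}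
    (hd : conjugatesOf x ^ n = conjugatesOf d) : conjugatesOf x ^ 2 = x • conjugatesOf x := by
  set K := conjugatesOf x
  have hKn : K ^ n = conjugatesOf (x ^ n) := by
    rw [hd, (hd ▸ Set.pow_mem_pow mem_conjugatesOf_self : x ^ n ∈ conjugatesOf d).conjugatesOf_eq]
  rw [sq]
  refine Set.mul_eq_smul_of_ncard_le mem_conjugatesOf_self (Set.toFinite _) ?_
  rw [← sq]
  calc (K ^ 2).ncard ≤ (K ^ 2 * K ^ (n - 2)).ncard :=
      Set.ncard_le_ncard_mul_of_mem (Set.pow_mem_pow mem_conjugatesOf_self) (Set.toFinite _)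
    _ = ((· ^ n) '' K).ncard := by
      rw [← pow_add, Nat.add_sub_cancel' hn, hKn, image_pow_conjugatesOf]
    _ ≤ K.ncard := Set.ncard_image_le (Set.toFinite _)

lemma pow_conjugatesOf_eq_of_coprime (hK : conjugatesOf x ^ 2 = x • conjugatesOf x) {m : ℕ}
    (hm : m.Coprime (orderOf x)) : conjugatesOf x ^ m = conjugatesOf (x ^ m) := by
  obtain _ | k := m
  · ext y
    simp [conjugatesOf, eq_comm]
  have hsub : (· ^ (k + 1)) '' conjugatesOf x ⊆ conjugatesOf x ^ (k + 1) :=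
    Set.image_subset_iff.mpr fun _ => Set.pow_mem_pow
  rw [← image_pow_conjugatesOf]
  refine (Set.eq_of_subset_of_ncard_le hsub ?_ (Set.toFinite _)).symm
  rw [Set.pow_succ_eq_smul_of_sq_eq_smul hK, Set.ncard_smul_set,
    (pow_injOn_conjugatesOf hm).ncard_image]

end Finite

end

theorem stmt12 {G : Type*} [Group G] [Fintype G] (x : G) (n : ℕ) (hn : 2 ≤ n)
    (h : ∃ d : G, (conjClass G x) ^ n = conjClass G d) :
    ∀ m : ℕ, Nat.Coprime m (orderOf x) → ∃ e : G, (conjClass G x) ^ m = conjClass G e := by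
  simp only [conjClass_eq_conjugatesOf] at h ⊢
  obtain ⟨d, hd⟩ := h
  exact fun m hm => ⟨x ^ m, pow_conjugatesOf_eq_of_coprime (sq_conjugatesOf_eq_smul hn hd) hm⟩
end

section
/- Let G be a finite group and K = x^G a real conjugacy class with K^n = K for some n ≥ 2. Then x is a 2-element, K^m = K for every odd m, and K² = [x,G] is a normal subgroup of G. -/
open Pointwise

theorem stmt14 {G : Type*} [Group G] [Fintype G] (x : G) (n : ℕ) (hn : 2 ≤ n)
    (hreal : conjClass G x = (conjClass G x)⁻¹)
    (h : (conjClass G x) ^ n = conjClass G x) :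
    (∃ k : ℕ, orderOf x = 2 ^ k) ∧
    (∀ m : ℕ, Odd m → (conjClass G x) ^ m = conjClass G x) ∧
    (conjClass G x) ^ 2 = (commSub x : Set G) ∧ (commSub x).Normal := by
  obtain ⟨p, rfl⟩ : ∃ p, n = p + 1 := ⟨n - 1, by omega⟩
  have hp : 1 ≤ p := by omega
  set K := conjClass G x with hKdef
  have hxK : x ∈ K := IsConj.refl x
  have hxinv : x⁻¹ ∈ K := by
    rw [hreal]
    exact Set.inv_mem_inv.mpr hxK
  have hone : (1 : G) ∈ K ^ 2 := by
    have := Set.mul_mem_mul hxK hxinv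
    simpa [sq] using this
  -- K^a ⊆ K^(a+2j)
  have hup : ∀ a j : ℕ, K ^ a ⊆ K ^ (a + 2 * j) := by
    intro a j
    induction j with
    | zero => simp
    | succ j ih =>
      refine ih.trans ?_
      intro y hy
      have : y * 1 ∈ K ^ (a + 2 * j) * K ^ 2 := Set.mul_mem_mul hy hone
      rw [← pow_add] at this
      simpa [show a + 2 * j + 2 = a + 2 * (j + 1) by ring] using this
  -- periodicity with period p
  have hper : ∀ k a : ℕ, K ^ (a + 1 + k * p) = K ^ (a + 1) := by
    intro k
    induction k with
    | zero => intro a; simp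
    | succ k ih =>
      intro a
      rw [show a + 1 + (k + 1) * p = (a + k * p) + (p + 1) by ring, pow_add, h,
        ← pow_succ, show a + k * p + 1 = a + 1 + k * p by ring, ih]
  -- K^m = K for odd m
  have hodd : ∀ m : ℕ, Odd m → K ^ m = K := by
    rintro m ⟨t, rfl⟩
    apply subset_antisymm
    · have key : K ^ (0 + 1 + (2 * (2 * t + 1)) * p) = K ^ (0 + 1) := hper _ 0
      rw [show (2 * (2 * t + 1)) * p = 2 * ((2 * t + 1) * p) by ring] at key
      have h1 : 2 * t + 1 ≤ (2 * t + 1) * p := Nat.le_mul_of_pos_right _ (by omega)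
      have e : (2 * t + 1) + 2 * ((2 * t + 1) * p - t) = 0 + 1 + 2 * ((2 * t + 1) * p) := by
        omega
      have := hup (2 * t + 1) ((2 * t + 1) * p - t)
      rw [e, key] at this
      simpa using this
    · have := hup 1 t
      simpa [show 1 + 2 * t = 2 * t + 1 by ring] using this
  -- conjugation stays in K
  have hconjK : ∀ a ∈ K, ∀ g : G, g * a * g⁻¹ ∈ K := by
    intro a ha g
    exact ha.trans (isConj_iff.mpr ⟨g, rfl⟩)
  -- part 1 : 2-element
  have part1 : ∃ k : ℕ, orderOf x = 2 ^ k := by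
    have hordpos : 0 < orderOf x := orderOf_pos x
    set ν := (orderOf x).factorization 2 with hν
    set m := orderOf x / 2 ^ ν with hm
    have hmdvd : m ∣ orderOf x := Nat.ordCompl_dvd (orderOf x) 2
    have hmodd : Odd m := by
      have hnd : ¬ 2 ∣ m := Nat.not_dvd_ordCompl (by norm_num) hordpos.ne'
      rcases Nat.even_or_odd m with he | ho
      · exact absurd he.two_dvd hnd
      · exact ho
    have hxm : x ^ m ∈ K := by
      have := Set.pow_mem_pow hxK (n := m)
      rwa [hodd m hmodd] at this
    have hconj : IsConj x (x ^ m) := hxm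
    obtain ⟨c, hc⟩ := isConj_iff.mp hconj
    have hord_eq : orderOf (x ^ m) = orderOf x := by
      rw [← hc]
      have := orderOf_injective (MulAut.conj c).toMonoidHom (MulEquiv.injective _) x
      simpa [MulAut.conj] using this
    have hpow : orderOf (x ^ m) = orderOf x / Nat.gcd (orderOf x) m := orderOf_pow x
    rw [Nat.gcd_eq_right hmdvd] at hpow
    have hm1 : m = 1 := by
      have h2 : orderOf x = orderOf x / m := by rw [← hpow, hord_eq]
      have h3 : m * (orderOf x / m) = orderOf x := Nat.mul_div_cancel' hmdvd
      nlinarith [Nat.pos_of_dvd_of_pos hmdvd hordpos]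
    have hfac : 2 ^ ν * m = orderOf x := Nat.ordProj_mul_ordCompl_eq_self (orderOf x) 2
    exact ⟨ν, by rw [← hfac, hm1, mul_one]⟩
  -- subgroup structure on K^2
  have hK4 : ∀ a ∈ K ^ 2, ∀ b ∈ K ^ 2, a * b ∈ K ^ 2 := by
    intro a ha b hb
    have := Set.mul_mem_mul ha hb
    rw [← pow_add] at this
    rwa [show (2 + 2 : ℕ) = 3 + 1 from rfl, pow_succ, hodd 3 ⟨1, rfl⟩, ← sq] at this
  have hKinv : (K ^ 2)⁻¹ = K ^ 2 := by
    rw [← inv_pow, ← hreal]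
  have hinv2 : ∀ a ∈ K ^ 2, a⁻¹ ∈ K ^ 2 := by
    intro a ha
    have : a⁻¹ ∈ (K ^ 2)⁻¹ := Set.inv_mem_inv.mpr ha
    rwa [hKinv] at this
  have hSsub : {z | ∃ g : G, z = x⁻¹ * (g⁻¹ * x * g)} ⊆ K ^ 2 := by
    rintro z ⟨g, rfl⟩
    rw [sq]
    refine Set.mul_mem_mul hxinv ?_
    have := hconjK x hxK g⁻¹
    simpa using this
  have hNsub : (commSub x : Set G) ⊆ K ^ 2 := by
    intro y hy
    exact (Subgroup.closure_le ⟨⟨⟨K ^ 2, fun {a b} ha hb => hK4 _ ha _ hb⟩, hone⟩,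
      fun {a} ha => hinv2 _ ha⟩).mpr hSsub hy
  have hx2N : x * x ∈ commSub x := by
    obtain ⟨c, hc⟩ := isConj_iff.mp (hxinv : IsConj x x⁻¹)
    have hmem : x⁻¹ * x⁻¹ ∈ commSub x := by
      apply Subgroup.subset_closure
      refine ⟨c⁻¹, ?_⟩
      rw [inv_inv, hc]
    have := (commSub x).inv_mem hmem
    simpa using this
  have hK2N : K ^ 2 ⊆ (commSub x : Set G) := by
    intro y hy
    rw [sq, Set.mem_mul] at hy
    obtain ⟨a, ha, b, hb, rfl⟩ := hy
    obtain ⟨u, hu⟩ := isConj_iff.mp (ha : IsConj x a)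
    obtain ⟨v, hv⟩ := isConj_iff.mp (hb : IsConj x b)
    have key : a * b = (x * x) * (x⁻¹ * ((u⁻¹ * x)⁻¹ * x * (u⁻¹ * x)))
        * (x⁻¹ * ((v⁻¹)⁻¹ * x * v⁻¹)) := by
      rw [← hu, ← hv]; group
    rw [key]
    exact (commSub x).mul_mem ((commSub x).mul_mem hx2N
      (Subgroup.subset_closure ⟨u⁻¹ * x, rfl⟩)) (Subgroup.subset_closure ⟨v⁻¹, rfl⟩)
  have hK2eq : K ^ 2 = (commSub x : Set G) := Set.Subset.antisymm hK2N hNsub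
  refine ⟨part1, hodd, hK2eq, ?_⟩
  constructor
  intro a haN g
  have ha2 : a ∈ K ^ 2 := by rw [hK2eq]; exact haN
  rw [sq, Set.mem_mul] at ha2
  obtain ⟨u, hu, v, hv, rfl⟩ := ha2
  have : (g * u * g⁻¹) * (g * v * g⁻¹) ∈ K ^ 2 := by
    rw [sq]
    exact Set.mul_mem_mul (hconjK u hu g) (hconjK v hv g)
  have heq : g * (u * v) * g⁻¹ = (g * u * g⁻¹) * (g * v * g⁻¹) := by group
  rw [heq]
  exact hK2N this
end

section
/- Let G be a finite group such that for every conjugacy class K of G there exists n ≥ 2 with K^n a conjugacy class. Then G is nilpotent. -/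
open Pointwise

namespace Stmt15Aux

variable {G : Type*} [Group G]

lemma self_mem (a : G) : a ∈ conjClass G a := IsConj.refl a

lemma conj_mem {a k : G} (hk : k ∈ conjClass G a) (g : G) :
    g * k * g⁻¹ ∈ conjClass G a :=
  IsConj.trans hk (isConj_iff.mpr ⟨g, rfl⟩)

/-- `K * {x} = {x} * K` for `K` the class of `x`. -/
lemma class_comm (x : G) : conjClass G x * {x} = {x} * conjClass G x := by
  ext b
  constructor
  · rintro ⟨k, hk, y, hy, rfl⟩
    exact ⟨x, rfl, x⁻¹ * k * x, by simpa using conj_mem hk x⁻¹,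
      by rw [show y = x from hy]; group⟩
  · rintro ⟨y, hy, k, hk, rfl⟩
    exact ⟨x * k * x⁻¹, conj_mem hk x, x, rfl, by rw [show y = x from hy]; group⟩

lemma pow_mul_comm {T : Set G} {x : G} (hcomm : T * {x} = {x} * T) (m : ℕ) :
    T ^ m * {x} = {x} * T ^ m := by
  induction m with
  | zero => rw [pow_zero, one_mul, mul_one]
  | succ m ih =>
    calc T ^ (m + 1) * {x} = T ^ m * (T * {x}) := by rw [pow_succ, mul_assoc]
      _ = T ^ m * {x} * T := by rw [hcomm, mul_assoc]
      _ = {x} * T ^ (m + 1) := by rw [ih, mul_assoc, ← pow_succ]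

lemma pow_decomp {K T : Set G} {x : G} (hxT : {x} * T = K) (hcomm : T * {x} = {x} * T) (m : ℕ) :
    K ^ m = {x ^ m} * T ^ m := by
  induction m with
  | zero => simp [Set.singleton_one]
  | succ m ih =>
    calc K ^ (m + 1) = K ^ m * K := pow_succ K m
      _ = {x ^ m} * T ^ m * ({x} * T) := by rw [ih, ← hxT]
      _ = {x ^ m} * (T ^ m * {x}) * T := by simp only [mul_assoc]
      _ = {x ^ m} * ({x} * T ^ m) * T := by rw [pow_mul_comm hcomm m]
      _ = {x ^ m} * {x} * (T ^ m * T) := by simp only [mul_assoc]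
      _ = {x ^ (m + 1)} * T ^ (m + 1) := by
          rw [Set.singleton_mul_singleton, ← pow_succ, ← pow_succ]

/-- The key structural lemma: if some power `K^n` (`n ≥ 2`) of the conjugacy class `K` of `x`
is again a conjugacy class, then `x⁻¹ • K` is (the carrier of) a normal subgroup. -/
lemma exists_normal [Finite G] (x : G) (n : ℕ) (hn : 2 ≤ n) (d : G)
    (hd : conjClass G x ^ n = conjClass G d) :
    ∃ N : Subgroup G, N.Normal ∧ (N : Set G) = {x⁻¹} * conjClass G x := by
  classical
  have hxT : {x} * ({x⁻¹} * conjClass G x) = conjClass G x := by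
    rw [← mul_assoc, Set.singleton_mul_singleton, mul_inv_cancel, Set.singleton_one, one_mul]
  have hTx : ({x⁻¹} * conjClass G x) * {x} = conjClass G x := by
    rw [mul_assoc, class_comm, ← mul_assoc, Set.singleton_mul_singleton,
      inv_mul_cancel, Set.singleton_one, one_mul]
  have hTcomm : ({x⁻¹} * conjClass G x) * {x} = {x} * ({x⁻¹} * conjClass G x) :=
    hTx.trans hxT.symm
  have hKpow : ∀ m : ℕ, conjClass G x ^ m = {x ^ m} * ({x⁻¹} * conjClass G x) ^ m :=
    pow_decomp hxT hTcomm
  have h1T : (1 : G) ∈ {x⁻¹} * conjClass G x :=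
    ⟨x⁻¹, rfl, x, self_mem x, inv_mul_cancel x⟩
  have hle_pow : ∀ {a b : ℕ}, a ≤ b →
      ({x⁻¹} * conjClass G x) ^ a ⊆ ({x⁻¹} * conjClass G x) ^ b := by
    intro a b hab
    induction hab with
    | refl => exact subset_rfl
    | step hab ih =>
      refine ih.trans ?_
      rw [pow_succ]
      exact Set.subset_mul_left _ h1T
  have hcard_smul : ∀ (a : G) (S : Set G), ({a} * S).ncard = S.ncard := by
    intro a S
    rw [Set.singleton_mul]
    exact Set.ncard_image_of_injective S (mul_right_injective a)
  -- `K ^ n` is the class of `x ^ n`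
  have hKn : conjClass G x ^ n = conjClass G (x ^ n) := by
    have hxnK : x ^ n ∈ conjClass G x ^ n := Set.pow_mem_pow (self_mem x)
    rw [hd] at hxnK
    have hdx : IsConj d (x ^ n) := hxnK
    rw [hd]
    ext b
    exact ⟨fun hb => hdx.symm.trans hb, fun hb => hdx.trans hb⟩
  -- the class of `x ^ n` is at most as large as the class of `x`
  have hle : (conjClass G (x ^ n)).ncard ≤ (conjClass G x).ncard := by
    set φ : G → G := fun b =>
      if h : IsConj x b then
        Classical.choose (isConj_iff.mp h) * x ^ n * (Classical.choose (isConj_iff.mp h))⁻¹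
      else 1 with hφ
    have hsub : conjClass G (x ^ n) ⊆ φ '' conjClass G x := by
      intro b hb
      obtain ⟨g, hg⟩ := isConj_iff.mp hb
      refine ⟨g * x * g⁻¹, conj_mem (self_mem x) g, ?_⟩
      have hc : IsConj x (g * x * g⁻¹) := isConj_iff.mpr ⟨g, rfl⟩
      have hspec := Classical.choose_spec (isConj_iff.mp hc)
      rw [hφ]
      simp only [dif_pos hc]
      calc Classical.choose (isConj_iff.mp hc) * x ^ n * (Classical.choose (isConj_iff.mp hc))⁻¹
          = (Classical.choose (isConj_iff.mp hc) * x *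
              (Classical.choose (isConj_iff.mp hc))⁻¹) ^ n := conj_pow.symm
        _ = (g * x * g⁻¹) ^ n := by rw [hspec]
        _ = g * x ^ n * g⁻¹ := conj_pow
        _ = b := hg
    calc (conjClass G (x ^ n)).ncard ≤ (φ '' conjClass G x).ncard :=
          Set.ncard_le_ncard hsub (Set.toFinite _)
      _ ≤ (conjClass G x).ncard := Set.ncard_image_le (Set.toFinite _)
  -- hence `T ^ n = T`, so `T` is multiplicatively closed
  have hTn : {x⁻¹} * conjClass G x = ({x⁻¹} * conjClass G x) ^ n := by
    refine Set.eq_of_subset_of_ncard_le ?_ ?_ (Set.toFinite _)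
    · simpa using hle_pow (Nat.one_le_of_lt hn)
    · calc (({x⁻¹} * conjClass G x) ^ n).ncard
          = ({x ^ n} * ({x⁻¹} * conjClass G x) ^ n).ncard := (hcard_smul _ _).symm
        _ = (conjClass G x ^ n).ncard := by rw [hKpow n]
        _ = (conjClass G (x ^ n)).ncard := by rw [hKn]
        _ ≤ (conjClass G x).ncard := hle
        _ = ({x} * ({x⁻¹} * conjClass G x)).ncard := by rw [hxT]
        _ = ({x⁻¹} * conjClass G x).ncard := hcard_smul _ _
  have hmul : ({x⁻¹} * conjClass G x) * ({x⁻¹} * conjClass G x) ⊆ {x⁻¹} * conjClass G x := by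
    calc ({x⁻¹} * conjClass G x) * ({x⁻¹} * conjClass G x)
        = ({x⁻¹} * conjClass G x) ^ 2 := (pow_two _).symm
      _ ⊆ ({x⁻¹} * conjClass G x) ^ n := hle_pow hn
      _ = {x⁻¹} * conjClass G x := hTn.symm
  have hinv : ∀ t ∈ {x⁻¹} * conjClass G x, t⁻¹ ∈ {x⁻¹} * conjClass G x := by
    intro t ht
    have hpowmem : ∀ k : ℕ, t ^ (k + 1) ∈ {x⁻¹} * conjClass G x := by
      intro k
      induction k with
      | zero => simpa using ht
      | succ k ih =>
        rw [pow_succ]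
        exact hmul (Set.mul_mem_mul ih ht)
    have ho : 0 < orderOf t := orderOf_pos t
    obtain ⟨k, hk⟩ : ∃ k, orderOf t = k + 1 := ⟨orderOf t - 1, by omega⟩
    have htk : t⁻¹ = t ^ k := by
      have h1 := pow_orderOf_eq_one t
      rw [hk, pow_succ] at h1
      rw [(mul_eq_one_iff_eq_inv.mp h1).symm]
    rcases Nat.eq_zero_or_pos k with hk0 | hk0
    · subst hk0
      rw [htk, pow_zero]
      exact h1T
    · obtain ⟨j, rfl⟩ : ∃ j, k = j + 1 := ⟨k - 1, by omega⟩
      rw [htk]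
      exact hpowmem j
  refine ⟨{ carrier := {x⁻¹} * conjClass G x
            one_mem' := h1T
            mul_mem' := fun ha hb => hmul (Set.mul_mem_mul ha hb)
            inv_mem' := fun ha => hinv _ ha }, ?_, rfl⟩
  constructor
  intro t ht g
  obtain ⟨y, hy, k, hk, rfl⟩ := ht
  have hyx : y = x⁻¹ := hy
  subst hyx
  have h2 : x⁻¹ * (g * x * g⁻¹) ∈ {x⁻¹} * conjClass G x :=
    ⟨x⁻¹, rfl, _, conj_mem (self_mem x) g, rfl⟩
  have h3 : x⁻¹ * (g * k * g⁻¹) ∈ {x⁻¹} * conjClass G x :=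
    ⟨x⁻¹, rfl, _, conj_mem hk g, rfl⟩
  have he : g * (x⁻¹ * k) * g⁻¹ =
      (x⁻¹ * (g * x * g⁻¹))⁻¹ * (x⁻¹ * (g * k * g⁻¹)) := by group
  show g * (x⁻¹ * k) * g⁻¹ ∈ {x⁻¹} * conjClass G x
  rw [he]
  exact hmul (Set.mul_mem_mul (hinv _ h2) h3)

/-- Conjugacy classes in a quotient are images of conjugacy classes. -/
lemma conjClass_quotient (N : Subgroup G) [N.Normal] (x : G) :
    conjClass (G ⧸ N) (x : G ⧸ N) = QuotientGroup.mk '' conjClass G x := by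
  ext b
  constructor
  · intro hb
    obtain ⟨c, hc⟩ := isConj_iff.mp hb
    obtain ⟨g, rfl⟩ := QuotientGroup.mk_surjective c
    refine ⟨g * x * g⁻¹, conj_mem (self_mem x) g, ?_⟩
    rw [← hc]
    simp
  · rintro ⟨k, hk, rfl⟩
    obtain ⟨g, hg⟩ := isConj_iff.mp hk
    refine isConj_iff.mpr ⟨(g : G ⧸ N), ?_⟩
    rw [← hg]
    simp

/-- The hypothesis passes to quotients. -/
lemma hyp_quotient (N : Subgroup G) [N.Normal]
    (h : ∀ x : G, ∃ n : ℕ, 2 ≤ n ∧ ∃ d : G, (conjClass G x) ^ n = conjClass G d) :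
    ∀ y : G ⧸ N, ∃ n : ℕ, 2 ≤ n ∧ ∃ e : G ⧸ N,
      (conjClass (G ⧸ N) y) ^ n = conjClass (G ⧸ N) e := by
  intro y
  obtain ⟨x, rfl⟩ := QuotientGroup.mk_surjective y
  obtain ⟨n, hn, d, hd⟩ := h x
  refine ⟨n, hn, (d : G ⧸ N), ?_⟩
  rw [conjClass_quotient N, conjClass_quotient N]
  have himg : ((QuotientGroup.mk '' conjClass G x : Set (G ⧸ N))) ^ n
      = (QuotientGroup.mk '' ((conjClass G x) ^ n) : Set (G ⧸ N)) := by
    have := Set.image_pow (QuotientGroup.mk' N) (conjClass G x) n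
    rw [QuotientGroup.coe_mk'] at this
    exact this.symm
  rw [himg, hd]

/-- Under the hypothesis, a finite nontrivial group has nontrivial center. -/
lemma center_ne_bot [Finite G] [Nontrivial G]
    (h : ∀ x : G, ∃ n : ℕ, 2 ≤ n ∧ ∃ d : G, (conjClass G x) ^ n = conjClass G d) :
    Subgroup.center G ≠ ⊥ := by
  classical
  have htop : (⊤ : Subgroup G) ≠ ⊥ := by
    obtain ⟨g, hg⟩ := exists_ne (1 : G)
    intro hc
    exact hg (Subgroup.mem_bot.mp (hc ▸ Subgroup.mem_top g))
  have hex : ∃ m : ℕ, ∃ N : Subgroup G, N.Normal ∧ N ≠ ⊥ ∧ Nat.card N = m :=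
    ⟨Nat.card (⊤ : Subgroup G), ⊤, inferInstance, htop, rfl⟩
  obtain ⟨N, hNn, hNb, hNc⟩ := Nat.find_spec hex
  obtain ⟨⟨x, hxN⟩, hx1⟩ := Subgroup.ne_bot_iff_exists_ne_one.mp hNb
  have hx1' : x ≠ 1 := by simpa [Subgroup.mk_eq_one] using hx1
  obtain ⟨n, hn, d, hd⟩ := h x
  obtain ⟨M, hMn, hMcar⟩ := exists_normal x n hn d hd
  have hxMK : {x} * (M : Set G) = conjClass G x := by
    rw [hMcar, ← mul_assoc, Set.singleton_mul_singleton, mul_inv_cancel,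
      Set.singleton_one, one_mul]
  have hxZ : x ∈ Subgroup.center G := by
    have hMN : M ≤ N := by
      intro t ht
      have ht' : t ∈ ({x⁻¹} : Set G) * conjClass G x := by
        rw [← hMcar]; exact ht
      obtain ⟨y, rfl, k, hk, rfl⟩ := ht'
      obtain ⟨g, hg⟩ := isConj_iff.mp hk
      rw [← hg]
      exact N.mul_mem (N.inv_mem hxN) (hNn.conj_mem x hxN g)
    by_cases hMbot : M = ⊥
    · have hKx : conjClass G x = {x} := by
        rw [← hxMK, hMbot]
        simp
      rw [Subgroup.mem_center_iff]
      intro g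
      have hmem := conj_mem (self_mem x) g
      rw [hKx] at hmem
      have hgx : g * x * g⁻¹ = x := hmem
      calc g * x = (g * x * g⁻¹) * g := by group
        _ = x * g := by rw [hgx]
    · exfalso
      have hcard : Nat.card N ≤ Nat.card M := by
        rw [hNc]
        exact Nat.find_min' hex ⟨M, hMn, hMbot, rfl⟩
      have hMN' : M = N := Subgroup.eq_of_le_of_card_ge hMN hcard
      have h1K : (1 : G) ∈ conjClass G x := by
        rw [← hxMK, hMN']
        exact ⟨x, rfl, x⁻¹, N.inv_mem hxN, mul_inv_cancel x⟩
      exact hx1' (isConj_one_left.mp h1K)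
  intro hbot
  rw [hbot] at hxZ
  exact hx1' (Subgroup.mem_bot.mp hxZ)

theorem main (G : Type*) [hG : Group G] [Fintype G]
    (h : ∀ x : G, ∃ n : ℕ, 2 ≤ n ∧ ∃ d : G, (conjClass G x) ^ n = conjClass G d) :
    Group.IsNilpotent G := by
  classical
  revert hG
  apply @Fintype.induction_subsingleton_or_nontrivial _ G _
  · intro α _ _ _ _
    infer_instance
  · intro α _ _ ih hGα hα
    have hZ : Subgroup.center α ≠ ⊥ := center_ne_bot hα
    have hcq : Fintype.card (α ⧸ Subgroup.center α) < Fintype.card α := by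
      simp only [← Nat.card_eq_fintype_card]
      rw [Subgroup.card_eq_card_quotient_mul_card_subgroup (Subgroup.center α)]
      apply lt_mul_of_one_lt_right
      · exact Nat.card_pos
      · exact (Subgroup.one_lt_card_iff_ne_bot _).mpr hZ
    have hq : Group.IsNilpotent (α ⧸ Subgroup.center α) :=
      ih _ hcq (hyp_quotient (Subgroup.center α) hα)
    exact of_quotient_center_nilpotent hq

end Stmt15Aux

theorem stmt15 {G : Type*} [Group G] [Fintype G]
    (h : ∀ x : G, ∃ n : ℕ, 2 ≤ n ∧ ∃ d : G, (conjClass G x) ^ n = conjClass G d) :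
    Group.IsNilpotent G :=
  Stmt15Aux.main G h
end

section
/- Let G be a finite group and K = x^G a conjugacy class such that K^n = {1} ∪ D for some n ≥ 2 and some conjugacy class D. Then KK⁻¹ = {1} ∪ D. -/
/-!
Write `K = x^G` and `D = d^G`. Since `1 ∈ K^n`, some `k ∈ K` has `k⁻¹ ∈ K^(n-1)`; as `K^(n-1)` is
a union of conjugacy classes it contains the whole class `K⁻¹` of `k⁻¹`, so `KK⁻¹ ⊆ K^n = {1} ∪ D`.
Now `KK⁻¹` is again a union of conjugacy classes containing `1`: if it contains some `a ≠ 1`, then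
`a ∈ D` and hence `D ⊆ KK⁻¹`. Otherwise `K = {x}` is central, `K^n = {x^n}` is a single element,
and so `D = {1}`.
-/

open Pointwise

section ConjClosed

variable {G : Type*} [Group G]

theorem IsConj.inv {a b : G} (h : IsConj a b) : IsConj a⁻¹ b⁻¹ := by
  obtain ⟨c, rfl⟩ := isConj_iff.mp h
  exact isConj_iff.mpr ⟨c, conj_inv.symm⟩

def IsConjClosed (S : Set G) : Prop := ∀ ⦃a b : G⦄, IsConj a b → a ∈ S → b ∈ S

theorem isConjClosed_conjClass (x : G) : IsConjClosed (conjClass G x) :=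
  fun _ _ hab hxa => IsConj.trans hxa hab

theorem isConjClosed_one : IsConjClosed ({1} : Set G) := by
  rintro a b hab rfl
  exact isConj_one_right.mp hab

namespace IsConjClosed

variable {S T : Set G}

theorem mul (hS : IsConjClosed S) (hT : IsConjClosed T) : IsConjClosed (S * T) := by
  rintro - b hab ⟨s, hs, t, ht, rfl⟩
  obtain ⟨c, rfl⟩ := isConj_iff.mp hab
  exact ⟨c * s * c⁻¹, hS (isConj_iff.mpr ⟨c, rfl⟩) hs,
    c * t * c⁻¹, hT (isConj_iff.mpr ⟨c, rfl⟩) ht, conj_mul⟩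

theorem pow (hS : IsConjClosed S) (n : ℕ) : IsConjClosed (S ^ n) := by
  induction n with
  | zero => rw [pow_zero, ← Set.singleton_one]; exact isConjClosed_one
  | succ k ih => rw [pow_succ]; exact ih.mul hS

theorem inv (hS : IsConjClosed S) : IsConjClosed S⁻¹ :=
  fun _ _ hab ha => hS hab.inv ha

theorem conjClass_subset_of_ne_one (hS : IsConjClosed S) {a d : G} (ha : a ∈ S) (ha1 : a ≠ 1)
    (hSd : S ⊆ {1} ∪ conjClass G d) : conjClass G d ⊆ S :=
  fun _ hb => hS (((hSd ha).resolve_left ha1).symm.trans hb) ha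

end IsConjClosed

end ConjClosed

section PowConjClass

variable {G : Type*} [Group G] {x : G}

theorem inv_conjClass_subset_pow {m : ℕ} (h1 : (1 : G) ∈ conjClass G x ^ (m + 1)) :
    (conjClass G x)⁻¹ ⊆ conjClass G x ^ m := by
  rw [pow_succ] at h1
  obtain ⟨p, hp, k, hk, hpk⟩ := h1
  intro y hy
  have hky : IsConj k y⁻¹ := IsConj.trans (IsConj.symm hk) hy
  exact (isConjClosed_conjClass x).pow m
    (by simpa [eq_inv_of_mul_eq_one_left hpk] using hky.inv) hp

theorem conjClass_mul_inv_subset_pow {n : ℕ} (hn : n ≠ 0) (h1 : (1 : G) ∈ conjClass G x ^ n) :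
    conjClass G x * (conjClass G x)⁻¹ ⊆ conjClass G x ^ n := by
  obtain ⟨m, rfl⟩ := Nat.exists_eq_succ_of_ne_zero hn
  rw [pow_succ']
  exact Set.mul_subset_mul_left (inv_conjClass_subset_pow h1)

end PowConjClass

theorem Set.subset_one_of_singleton_eq_one_union {M : Type*} [One M] {y : M} {B : Set M}
    (h : ({y} : Set M) = {1} ∪ B) : B ⊆ {1} := by
  have hy : (1 : M) = y := Set.singleton_subset_singleton.mp (h ▸ Set.subset_union_left)
  exact hy ▸ h ▸ Set.subset_union_right

theorem stmt16_general {G : Type*} [Group G] (x d : G) (n : ℕ) (hn : 2 ≤ n)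
    (h : (conjClass G x) ^ n = {1} ∪ conjClass G d) :
    conjClass G x * (conjClass G x)⁻¹ = {1} ∪ conjClass G d := by
  set K := conjClass G x
  have hxK : x ∈ K := IsConj.refl x
  have h1K : (1 : G) ∈ K * K⁻¹ := ⟨x, hxK, x⁻¹, Set.inv_mem_inv.mpr hxK, mul_inv_cancel x⟩
  have hsub : K * K⁻¹ ⊆ {1} ∪ conjClass G d :=
    h ▸ conjClass_mul_inv_subset_pow (by omega) (h ▸ Set.mem_union_left _ rfl)
  refine hsub.antisymm (Set.union_subset (Set.singleton_subset_iff.mpr h1K) ?_)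
  by_cases hK : ∃ y ∈ K, y ≠ x
  · obtain ⟨y, hy, hyx⟩ := hK
    have hKK : IsConjClosed (K * K⁻¹) :=
      (isConjClosed_conjClass x).mul (isConjClosed_conjClass x).inv
    exact hKK.conjClass_subset_of_ne_one ⟨x, hxK, y⁻¹, Set.inv_mem_inv.mpr hy, rfl⟩
      (mul_inv_eq_one.not.mpr hyx.symm) hsub
  · have hKx : K = {x} := Set.eq_singleton_iff_unique_mem.mpr ⟨hxK, by simpa using hK⟩
    rw [hKx, Set.singleton_pow] at h
    exact (Set.subset_one_of_singleton_eq_one_union h).trans (Set.singleton_subset_iff.mpr h1K)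

theorem stmt16 {G : Type*} [Group G] [Fintype G] (x d : G) (n : ℕ) (hn : 2 ≤ n)
    (h : (conjClass G x) ^ n = {1} ∪ conjClass G d) :
    conjClass G x * (conjClass G x)⁻¹ = {1} ∪ conjClass G d :=
  stmt16_general x d n hn h
end

section
/- Let G be a finite group and K = x^G with K^n = D ∪ D⁻¹ for some n ≥ 2 and some conjugacy class D with D ≠ D⁻¹. Then K is not real, i.e., K ≠ K⁻¹. -/
open Pointwise

lemma isConj_inv_aux {G : Type*} [Group G] {a b : G} (h : IsConj a b) :
    IsConj a⁻¹ b⁻¹ := by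
  rw [isConj_iff] at h ⊢
  obtain ⟨c, hc⟩ := h
  exact ⟨c, by rw [← hc]; group⟩

lemma conjClass_inv_aux {G : Type*} [Group G] (a : G) :
    (conjClass G a)⁻¹ = conjClass G a⁻¹ := by
  ext b
  simp only [conjClass, Set.mem_inv, Set.mem_setOf_eq]
  constructor
  · intro hb; simpa using isConj_inv_aux hb
  · intro hb; simpa using isConj_inv_aux hb

lemma conjClass_eq_of_isConj {G : Type*} [Group G] {a b : G} (h : IsConj a b) :
    conjClass G a = conjClass G b :=
  Set.ext fun _ => ⟨fun hc => h.symm.trans hc, fun hc => h.trans hc⟩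

theorem stmt17 {G : Type*} [Group G] [Fintype G] (x d : G) (n : ℕ) (hn : 2 ≤ n)
    (h : (conjClass G x) ^ n = conjClass G d ∪ (conjClass G d)⁻¹)
    (hd : conjClass G d ≠ (conjClass G d)⁻¹) :
    conjClass G x ≠ (conjClass G x)⁻¹ := by
  intro hK
  set K := conjClass G x with hKdef
  have hx : x ∈ K := IsConj.refl x
  have hxinv : x⁻¹ ∈ K := by
    rw [hK, Set.mem_inv, inv_inv]; exact hx
  have h1 : (1 : G) ∈ K ^ 2 := by
    rw [sq]
    simpa using Set.mul_mem_mul hx hxinv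
  have step : ∀ m : ℕ, ∀ a ∈ K ^ m, a ∈ K ^ (m + 2) := by
    intro m a ha
    rw [pow_add]
    simpa using Set.mul_mem_mul ha h1
  have claim : ∀ k : ℕ, (1 : G) ∈ K ^ (2 * k + 2) ∧ x ∈ K ^ (2 * k + 1) := by
    intro k
    induction k with
    | zero => exact ⟨h1, by simpa using hx⟩
    | succ k ih =>
      constructor
      · have e : 2 * (k+1) + 2 = (2 * k + 2) + 2 := by ring
        rw [e]; exact step _ _ ih.1
      · have e : 2 * (k+1) + 1 = (2 * k + 1) + 2 := by ring
        rw [e]; exact step _ _ ih.2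
  rcases Nat.even_or_odd n with he | ho
  · -- n even, n ≥ 2 : 1 ∈ K^n
    obtain ⟨k, hk⟩ := he
    have hk1 : 1 ≤ k := by omega
    have hone : (1 : G) ∈ K ^ n := by
      have := (claim (k - 1)).1
      have hnn : 2 * (k - 1) + 2 = n := by omega
      rwa [hnn] at this
    rw [h] at hone
    have h1D : (1 : G) ∈ conjClass G d := by
      rcases hone with h' | h'
      · exact h'
      · rw [Set.mem_inv] at h'; simpa using h'
    have hdc : IsConj d 1 := h1D
    have : d = 1 := by simpa using hdc
    apply hd
    subst this
    have hone' : conjClass G (1 : G) = {1} := by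
      ext b; simp [conjClass, isConj_one_left]
    rw [hone']
    simp
  · -- n odd : x ∈ K^n
    obtain ⟨k, hk⟩ := ho
    have hxn : x ∈ K ^ n := by
      have := (claim k).2
      rwa [← hk] at this
    rw [h] at hxn
    rcases hxn with h' | h'
    · -- IsConj d x
      have hDK : conjClass G d = K := conjClass_eq_of_isConj h'
      apply hd
      rw [hDK]; exact hK
    · -- x ∈ D⁻¹, so IsConj d x⁻¹
      rw [Set.mem_inv] at h'
      have hDK : conjClass G d = conjClass G x⁻¹ := conjClass_eq_of_isConj h'
      have : conjClass G d = K⁻¹ := by rw [hDK, ← conjClass_inv_aux]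
      apply hd
      rw [this, inv_inv]; exact hK.symm
end
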